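/- arXiv:math/0109139 — 9 statements merged into one kernel-verified Lean document; each statement's English description precedes it below -/
import Mathlib

section
/- In the universal enveloping algebra of sl₂ over a field F of characteristic zero, for all integers i > 0 and j, k ≥ 0 one has (j+1)·f·(eⁱ f^j e^k) = (j−i+1)·eⁱ f^{j+1} e^k + i·e^{i−1} f^{j+1} e^{k+1} + i(j−i+1)(j+1)·e^{i−1} f^j e^k. -/
open UniversalEnvelopingAlgebra

section Aux

variable {F A : Type*} [Field F] [Ring A] [Algebra F A] (E H Fv : A)

private theorem auxL1 (hHE : H * E = E * H + (2:F) • E) (hFE : Fv * E = E * Fv - H) :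
    ∀ n : ℕ, Fv * E^(n+1) = E^(n+1)*Fv - ((n:F)+1) • (E^n * H) - (((n:F)+1)*(n:F)) • E^n := by
  intro n
  induction n with
  | zero => simp [hFE]
  | succ n ih =>
    have : Fv * E^(n+1+1) = (Fv * E^(n+1)) * E := by rw [mul_assoc, ← pow_succ]
    rw [this, ih]
    push_cast
    simp only [sub_mul, smul_mul_assoc, mul_assoc, ← pow_succ, hHE, hFE]
    simp only [mul_add, mul_sub, mul_smul_comm, ← pow_succ, ← mul_assoc, ← pow_succ']
    module

private theorem auxL2 (hHF : H * Fv = Fv * H - (2:F) • Fv) (hEF : E * Fv = Fv * E + H) :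
    ∀ n : ℕ, E * Fv^(n+1) = Fv^(n+1)*E + ((n:F)+1) • (Fv^n * H) - (((n:F)+1)*(n:F)) • Fv^n := by
  intro n
  induction n with
  | zero => simp [hEF]
  | succ n ih =>
    have : E * Fv^(n+1+1) = (E * Fv^(n+1)) * Fv := by rw [mul_assoc, ← pow_succ]
    rw [this, ih]
    push_cast
    simp only [sub_mul, add_mul, smul_mul_assoc, mul_assoc, ← pow_succ, hHF, hEF]
    simp only [mul_add, mul_sub, mul_smul_comm, ← pow_succ, ← mul_assoc, ← pow_succ']
    module

private theorem auxL3 (hHF : H * Fv = Fv * H - (2:F) • Fv) :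
    ∀ n : ℕ, H * Fv^n = Fv^n * H - (2*(n:F)) • Fv^n := by
  intro n
  induction n with
  | zero => simp
  | succ n ih =>
    have : H * Fv^(n+1) = (H * Fv^n) * Fv := by rw [mul_assoc, ← pow_succ]
    rw [this, ih]
    push_cast
    simp only [sub_mul, smul_mul_assoc, mul_assoc, ← pow_succ, hHF]
    simp only [mul_sub, mul_smul_comm, ← pow_succ, ← mul_assoc]
    module

private theorem auxMain (hHE : H * E = E * H + (2:F) • E)
    (hHF : H * Fv = Fv * H - (2:F) • Fv) (hEF : E * Fv = Fv * E + H) (m j k : ℕ) :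
    ((j : F) + 1) • (Fv * (E ^ (m+1) * (Fv ^ j * E ^ k))) =
      ((j : F) - ((m:F)+1) + 1) • (E ^ (m+1) * (Fv ^ (j + 1) * E ^ k)) +
        ((m:F)+1) • (E ^ m * (Fv ^ (j + 1) * E ^ (k + 1))) +
        (((m:F)+1) * ((j : F) - ((m:F)+1) + 1) * ((j : F) + 1)) •
          (E ^ m * (Fv ^ j * E ^ k)) := by
  have hFE : Fv * E = E * Fv - H := by rw [hEF]; abel
  -- eq2 : X = W - 2j • Y
  have eq2 : E^m*(H*(Fv^j*E^k)) = E^m*(Fv^j*(H*E^k)) - (2*(j:F))•(E^m*(Fv^j*E^k)) := by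
    calc E^m*(H*(Fv^j*E^k)) = E^m*((H*Fv^j)*E^k) := by rw [mul_assoc]
    _ = E^m*((Fv^j*H - (2*(j:F))•Fv^j)*E^k) := by rw [auxL3 H Fv hHF j]
    _ = _ := by
        simp only [sub_mul, smul_mul_assoc, mul_sub, mul_smul_comm, mul_assoc]
  -- hA : A = B + (j+1) • W - (j+1)j • Y
  have hA : E^(m+1)*(Fv^(j+1)*E^k) =
      E^m*(Fv^(j+1)*E^(k+1)) + ((j:F)+1)•(E^m*(Fv^j*(H*E^k)))
        - (((j:F)+1)*(j:F))•(E^m*(Fv^j*E^k)) := by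
    calc E^(m+1)*(Fv^(j+1)*E^k) = E^m*((E*Fv^(j+1))*E^k) := by
          rw [pow_succ, mul_assoc, mul_assoc]
    _ = E^m*((Fv^(j+1)*E + ((j:F)+1) • (Fv^j * H) - (((j:F)+1)*(j:F)) • Fv^j)*E^k) := by
          rw [auxL2 E H Fv hHF hEF j]
    _ = _ := by
        simp only [sub_mul, add_mul, smul_mul_assoc, mul_sub, mul_add, mul_smul_comm,
          mul_assoc, pow_succ']
  -- keyX : (j+1) • X = A - B - (j^2+j) • Y
  have keyX : ((j:F)+1) • (E^m*(H*(Fv^j*E^k))) =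
      E^(m+1)*(Fv^(j+1)*E^k) - E^m*(Fv^(j+1)*E^(k+1))
        - ((j:F)*((j:F)+1))•(E^m*(Fv^j*E^k)) := by
    linear_combination (norm := module) ((j:F)+1) • eq2 - hA
  -- hexp : F * E^{m+1} F^j E^k expanded
  have hexp : Fv * (E^(m+1)*(Fv^j*E^k)) =
      E^(m+1)*(Fv^(j+1)*E^k) - ((m:F)+1)•(E^m*(H*(Fv^j*E^k)))
        - (((m:F)+1)*(m:F))•(E^m*(Fv^j*E^k)) := by
    calc Fv * (E^(m+1)*(Fv^j*E^k)) = (Fv * E^(m+1))*(Fv^j*E^k) := by rw [mul_assoc]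
    _ = (E^(m+1)*Fv - ((m:F)+1) • (E^m * H) - (((m:F)+1)*(m:F)) • E^m)*(Fv^j*E^k) := by
          rw [auxL1 E H Fv hHE hFE m]
    _ = _ := by
        simp only [sub_mul, smul_mul_assoc, mul_assoc, pow_succ']
  linear_combination (norm := module) ((j:F)+1) • hexp - ((m:F)+1) • keyX

end Aux

/-- In U(sl₂), (j+1)·f·(eⁱ f^j e^k) =
(j−i+1)·eⁱ f^{j+1} e^k + i·e^{i−1} f^{j+1} e^{k+1} + i(j−i+1)(j+1)·e^{i−1} f^j e^k. -/
theorem stmt_3 (F : Type*) [Field F] [CharZero F]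
    (L : Type*) [LieRing L] [LieAlgebra F L] (e h f : L)
    (hbasis : ∃ b : Module.Basis (Fin 3) F L, b 0 = e ∧ b 1 = h ∧ b 2 = f)
    (he : ⁅h, e⁆ = (2 : F) • e) (hf : ⁅h, f⁆ = (-2 : F) • f) (hef : ⁅e, f⁆ = h)
    (i j k : ℕ) (hi : 0 < i) :
    ((j : F) + 1) • (ι F f * ((ι F e) ^ i * (ι F f) ^ j * (ι F e) ^ k)) =
      ((j : F) - (i : F) + 1) • ((ι F e) ^ i * (ι F f) ^ (j + 1) * (ι F e) ^ k) +
        (i : F) • ((ι F e) ^ (i - 1) * (ι F f) ^ (j + 1) * (ι F e) ^ (k + 1)) +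
        ((i : F) * ((j : F) - (i : F) + 1) * ((j : F) + 1)) •
          ((ι F e) ^ (i - 1) * (ι F f) ^ j * (ι F e) ^ k) := by
  obtain ⟨m, rfl⟩ : ∃ m, i = m + 1 := ⟨i - 1, (Nat.succ_pred_eq_of_pos hi).symm⟩
  have hHE : ι F h * ι F e = ι F e * ι F h + (2:F) • ι F e := by
    have h2 : ι F h * ι F e - ι F e * ι F h = (2:F) • ι F e := by
      letI := LieRing.ofAssociativeRing (A := UniversalEnvelopingAlgebra F L)
      have h3 := (ι F).map_lie h e; rw [he, map_smul] at h3; exact h3.symm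
    linear_combination (norm := module) h2
  have hHF : ι F h * ι F f = ι F f * ι F h - (2:F) • ι F f := by
    have h2 : ι F h * ι F f - ι F f * ι F h = (-2:F) • ι F f := by
      letI := LieRing.ofAssociativeRing (A := UniversalEnvelopingAlgebra F L)
      have h3 := (ι F).map_lie h f; rw [hf, map_smul] at h3; exact h3.symm
    linear_combination (norm := module) h2
  have hEF : ι F e * ι F f = ι F f * ι F e + ι F h := by
    have h2 : ι F e * ι F f - ι F f * ι F e = ι F h := by
      letI := LieRing.ofAssociativeRing (A := UniversalEnvelopingAlgebra F L)
      have h3 := (ι F).map_lie e f; rw [hef] at h3; exact h3.symm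
    linear_combination (norm := module) h2
  have main := auxMain (ι F e) (ι F h) (ι F f) hHE hHF hEF m j k
  push_cast
  simp only [Nat.add_sub_cancel, mul_assoc]
  linear_combination (norm := module) main
end

section
/- The universal enveloping algebra of sl₂ over a field F of characteristic zero is spanned as an F-vector space by the monomials eⁱ f^j e^k for i, j, k ≥ 0; equivalently, U(sl₂) = U(Fe)·U(Ff)·U(Fe). -/
open UniversalEnvelopingAlgebra

section Aux
variable {A : Type*} [Ring A]

private lemma hcomm_mul {H X Y : A} {c d : ℤ}
    (hX : H * X = X * H + c • X) (hY : H * Y = Y * H + d • Y) :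
    H * (X * Y) = X * Y * H + (c + d) • (X * Y) := by
  have h1 : H * (X * Y) = (X * H + c • X) * Y := by rw [← mul_assoc, hX]
  rw [h1, add_mul, smul_mul_assoc, mul_assoc, hY]
  simp only [mul_add, mul_smul_comm, ← mul_assoc]
  module

private lemma hcomm_pow {H X : A} {c : ℤ} (hX : H * X = X * H + c • X) (n : ℕ) :
    H * X ^ n = X ^ n * H + ((n : ℤ) * c) • X ^ n := by
  induction n with
  | zero => simp
  | succ m ih =>
    have h1 := hcomm_mul ih hX
    rw [← pow_succ] at h1
    rw [h1]
    push_cast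
    module

private lemma e_pow_f {E H Fv : A} (r2 : H * Fv = Fv * H + (-2 : ℤ) • Fv)
    (r3 : E * Fv = Fv * E + H) (m : ℕ) :
    E * Fv ^ (m + 1) = Fv ^ (m + 1) * E + ((m : ℤ) + 1) • (Fv ^ m * H)
      + (-((m : ℤ) * ((m : ℤ) + 1))) • Fv ^ m := by
  induction m with
  | zero => simpa using r3
  | succ m ih =>
    calc E * Fv ^ (m + 1 + 1) = (E * Fv ^ (m + 1)) * Fv := by
          rw [pow_succ, ← mul_assoc]
      _ = (Fv ^ (m + 1) * E + ((m : ℤ) + 1) • (Fv ^ m * H)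
            + (-((m : ℤ) * ((m : ℤ) + 1))) • Fv ^ m) * Fv := by rw [ih]
      _ = Fv ^ (m + 1) * (E * Fv) + ((m : ℤ) + 1) • (Fv ^ m * (H * Fv))
            + (-((m : ℤ) * ((m : ℤ) + 1))) • (Fv ^ m * Fv) := by
          simp only [add_mul, smul_mul_assoc, mul_assoc]
      _ = Fv ^ (m + 1) * (Fv * E + H)
            + ((m : ℤ) + 1) • (Fv ^ m * (Fv * H + (-2 : ℤ) • Fv))
            + (-((m : ℤ) * ((m : ℤ) + 1))) • (Fv ^ m * Fv) := by rw [r3, r2]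
      _ = Fv ^ (m + 1 + 1) * E + ((m + 1 : ℤ) + 1) • (Fv ^ (m + 1) * H)
            + (-((m + 1 : ℤ) * ((m + 1 : ℤ) + 1))) • Fv ^ (m + 1) := by
          simp only [mul_add, mul_smul_comm, smul_add, smul_smul, ← mul_assoc,
            ← pow_succ, ← pow_succ']
          module

private lemma master {E H Fv : A}
    (r1 : H * E = E * H + (2 : ℤ) • E) (r2 : H * Fv = Fv * H + (-2 : ℤ) • Fv)
    (r3 : E * Fv = Fv * E + H) (i j k : ℕ) :
    ((j : ℤ) + 1) • (E ^ i * Fv ^ j * E ^ k * H)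
      = E ^ (i + 1) * Fv ^ (j + 1) * E ^ k - E ^ i * Fv ^ (j + 1) * E ^ (k + 1)
        + (((j : ℤ) + 1) * ((j : ℤ) - 2 * (k : ℤ))) • (E ^ i * Fv ^ j * E ^ k) := by
  have hek := hcomm_pow r1 k
  have hfj' : Fv ^ j * H = H * Fv ^ j + ((j : ℤ) * 2) • Fv ^ j := by
    rw [hcomm_pow r2 j]; module
  have hH : H = E * Fv - Fv * E := by rw [r3]; abel
  have hcEE : E * E ^ k = E ^ k * E := by rw [← pow_succ', pow_succ]
  have hcFF : Fv * Fv ^ j = Fv ^ j * Fv := by rw [← pow_succ', pow_succ]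
  have hFEF : Fv * (E * Fv ^ j) = Fv ^ j * (Fv * E) + (j : ℤ) • (Fv ^ j * H)
      + (-((j : ℤ) * ((j : ℤ) - 1))) • Fv ^ j := by
    cases j with
    | zero => simp
    | succ m =>
      rw [e_pow_f r2 r3 m]
      simp only [mul_add, mul_smul_comm, ← mul_assoc, ← pow_succ, ← pow_succ']
      push_cast
      module
  simp only [pow_succ, mul_assoc]
  have hx : E ^ i * (Fv ^ j * (E ^ k * H))
      = E ^ i * (E * (Fv ^ j * (Fv * E ^ k)))
        - (E ^ i * (Fv ^ j * (Fv * (E ^ k * E)))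
          + (j : ℤ) • (E ^ i * (Fv ^ j * (E ^ k * H)))
          + ((j : ℤ) * ((k : ℤ) * 2)) • (E ^ i * (Fv ^ j * E ^ k))
          + (-((j : ℤ) * ((j : ℤ) - 1))) • (E ^ i * (Fv ^ j * E ^ k)))
        + ((j : ℤ) * 2) • (E ^ i * (Fv ^ j * E ^ k))
        - ((k : ℤ) * 2) • (E ^ i * (Fv ^ j * E ^ k)) := by
    calc E ^ i * (Fv ^ j * (E ^ k * H))
        = E ^ i * (Fv ^ j * (H * E ^ k)) - ((k : ℤ) * 2) • (E ^ i * (Fv ^ j * E ^ k)) := by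
          rw [hek]; simp only [mul_add, mul_smul_comm]; module
      _ = E ^ i * (H * (Fv ^ j * E ^ k)) + ((j : ℤ) * 2) • (E ^ i * (Fv ^ j * E ^ k))
            - ((k : ℤ) * 2) • (E ^ i * (Fv ^ j * E ^ k)) := by
          rw [← mul_assoc (Fv ^ j) H (E ^ k), hfj']
          simp only [add_mul, smul_mul_assoc, mul_add, mul_smul_comm, mul_assoc]
          try module
      _ = E ^ i * (E * (Fv * (Fv ^ j * E ^ k))) - E ^ i * (Fv * (E * (Fv ^ j * E ^ k)))
            + ((j : ℤ) * 2) • (E ^ i * (Fv ^ j * E ^ k))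
            - ((k : ℤ) * 2) • (E ^ i * (Fv ^ j * E ^ k)) := by
          rw [hH]
          simp only [sub_mul, mul_sub, mul_assoc]
      _ = E ^ i * (E * (Fv ^ j * (Fv * E ^ k))) - E ^ i * (Fv * (E * (Fv ^ j * E ^ k)))
            + ((j : ℤ) * 2) • (E ^ i * (Fv ^ j * E ^ k))
            - ((k : ℤ) * 2) • (E ^ i * (Fv ^ j * E ^ k)) := by
          rw [← mul_assoc Fv (Fv ^ j) (E ^ k), hcFF, mul_assoc (Fv ^ j) Fv (E ^ k)]
      _ = E ^ i * (E * (Fv ^ j * (Fv * E ^ k)))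
            - (E ^ i * (Fv ^ j * (Fv * (E ^ k * E)))
              + (j : ℤ) • (E ^ i * (Fv ^ j * (E ^ k * H)))
              + ((j : ℤ) * ((k : ℤ) * 2)) • (E ^ i * (Fv ^ j * E ^ k))
              + (-((j : ℤ) * ((j : ℤ) - 1))) • (E ^ i * (Fv ^ j * E ^ k)))
            + ((j : ℤ) * 2) • (E ^ i * (Fv ^ j * E ^ k))
            - ((k : ℤ) * 2) • (E ^ i * (Fv ^ j * E ^ k)) := by
          rw [← mul_assoc E (Fv ^ j) (E ^ k), ← mul_assoc Fv (E * Fv ^ j) (E ^ k), hFEF]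
          simp only [add_mul, smul_mul_assoc, mul_add, mul_smul_comm, mul_assoc]
          rw [hcEE, hek]
          simp only [mul_add, mul_smul_comm, smul_add, smul_smul]
          module
  have h2 : E ^ i * (Fv ^ j * (E ^ k * H)) + (j : ℤ) • (E ^ i * (Fv ^ j * (E ^ k * H)))
      = E ^ i * (E * (Fv ^ j * (Fv * E ^ k))) - E ^ i * (Fv ^ j * (Fv * (E ^ k * E)))
        + (((j : ℤ) + 1) * ((j : ℤ) - 2 * (k : ℤ))) • (E ^ i * (Fv ^ j * E ^ k)) := by
    nth_rewrite 1 [hx]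
    module
  calc ((j : ℤ) + 1) • (E ^ i * (Fv ^ j * (E ^ k * H)))
      = E ^ i * (Fv ^ j * (E ^ k * H)) + (j : ℤ) • (E ^ i * (Fv ^ j * (E ^ k * H))) := by
        module
    _ = _ := h2

end Aux

/-- U(sl₂) is spanned by the monomials eⁱ f^j e^k, i.e.
U(sl₂) = U(Fe)·U(Ff)·U(Fe). -/
theorem stmt_4 (F : Type*) [Field F] [CharZero F]
    (L : Type*) [LieRing L] [LieAlgebra F L] (e h f : L)
    (hbasis : ∃ b : Module.Basis (Fin 3) F L, b 0 = e ∧ b 1 = h ∧ b 2 = f)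
    (he : ⁅h, e⁆ = (2 : F) • e) (hf : ⁅h, f⁆ = (-2 : F) • f) (hef : ⁅e, f⁆ = h) :
    Submodule.span F
      {u : UniversalEnvelopingAlgebra F L |
        ∃ i j k : ℕ, u = (ι F e) ^ i * (ι F f) ^ j * (ι F e) ^ k} = ⊤ := by
  classical
  letI : LieRing (UniversalEnvelopingAlgebra F L) := LieRing.ofAssociativeRing
  obtain ⟨b, hb0, hb1, hb2⟩ := hbasis
  set E : UniversalEnvelopingAlgebra F L := ι F e with hE
  set Hh : UniversalEnvelopingAlgebra F L := ι F h with hHh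
  set Fv : UniversalEnvelopingAlgebra F L := ι F f with hFv
  set T : Submodule F (UniversalEnvelopingAlgebra F L) :=
    Submodule.span F {u : UniversalEnvelopingAlgebra F L |
      ∃ i j k : ℕ, u = E ^ i * Fv ^ j * E ^ k} with hT
  show T = ⊤
  -- the commutation relations in the enveloping algebra
  have bracket : ∀ x y : L, ι F x * ι F y - ι F y * ι F x = ι F ⁅x, y⁆ := by
    intro x y
    rw [LieHom.map_lie, Ring.lie_def]
  have r3 : E * Fv = Fv * E + Hh := by
    have h3 : E * Fv - Fv * E = Hh := by
      have := bracket e f; rw [hef] at this; exact this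
    rw [← h3]; abel
  have cast2 : ∀ u : UniversalEnvelopingAlgebra F L, (2 : F) • u = (2 : ℤ) • u := by
    intro u
    rw [show ((2 : F)) = (((2 : ℤ) : F)) by norm_num, Int.cast_smul_eq_zsmul]
  have r1 : Hh * E = E * Hh + (2 : ℤ) • E := by
    have h1 : Hh * E - E * Hh = (2 : F) • E := by
      have := bracket h e; rw [he, map_smul] at this; exact this
    rw [cast2] at h1
    rw [← h1]; abel
  have r2 : Hh * Fv = Fv * Hh + (-2 : ℤ) • Fv := by
    have h1 : Hh * Fv - Fv * Hh = (-2 : F) • Fv := by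
      have := bracket h f; rw [hf, map_smul] at this; exact this
    have h2 : ((-2 : F)) • Fv = (-2 : ℤ) • Fv := by
      rw [show ((-2 : F)) = (((-2 : ℤ) : F)) by norm_num, Int.cast_smul_eq_zsmul]
    rw [h2] at h1
    rw [← h1]; abel
  -- membership facts
  have memS : ∀ i j k : ℕ, E ^ i * Fv ^ j * E ^ k ∈ T :=
    fun i j k => Submodule.subset_span ⟨i, j, k, rfl⟩
  have mulE : ∀ i j k : ℕ, (E ^ i * Fv ^ j * E ^ k) * E ∈ T := by
    intro i j k
    have h1 : (E ^ i * Fv ^ j * E ^ k) * E = E ^ i * Fv ^ j * E ^ (k + 1) := by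
      rw [pow_succ, ← mul_assoc]
    rw [h1]; exact memS i j (k + 1)
  have mulH : ∀ i j k : ℕ, (E ^ i * Fv ^ j * E ^ k) * Hh ∈ T := by
    intro i j k
    have key := master r1 r2 r3 i j k
    have hne : ((j : F) + 1) ≠ 0 := by
      have : ((j : F) + 1) = ((j + 1 : ℕ) : F) := by push_cast; ring
      rw [this]
      exact Nat.cast_ne_zero.mpr (Nat.succ_ne_zero j)
    have hmem : (((j : ℤ) + 1)) • ((E ^ i * Fv ^ j * E ^ k) * Hh) ∈ T := by
      rw [key]
      exact add_mem (sub_mem (memS (i+1) (j+1) k) (memS i (j+1) (k+1)))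
        (zsmul_mem (memS i j k) _)
    have heq : (E ^ i * Fv ^ j * E ^ k) * Hh
        = ((j : F) + 1)⁻¹ • ((((j : ℤ) + 1)) • ((E ^ i * Fv ^ j * E ^ k) * Hh)) := by
      rw [show (((j : ℤ) + 1)) • ((E ^ i * Fv ^ j * E ^ k) * Hh)
          = (((j : F) + 1)) • ((E ^ i * Fv ^ j * E ^ k) * Hh) from by
        rw [show ((j : F) + 1) = (((j : ℤ) + 1 : ℤ) : F) by push_cast; ring,
          Int.cast_smul_eq_zsmul]]
      rw [inv_smul_smul₀ hne]
    rw [heq]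
    exact T.smul_mem _ hmem
  have Tmul : ∀ g : UniversalEnvelopingAlgebra F L,
      (∀ i j k : ℕ, (E ^ i * Fv ^ j * E ^ k) * g ∈ T) → ∀ t ∈ T, t * g ∈ T := by
    intro g hg t ht
    refine Submodule.span_induction ?_ ?_ ?_ ?_ ht
    · rintro u ⟨i, j, k, rfl⟩; exact hg i j k
    · simp
    · intro u v _ _ hu hv; rw [add_mul]; exact T.add_mem hu hv
    · intro c u _ hu; rw [smul_mul_assoc]; exact T.smul_mem c hu
  have mulF : ∀ i j k : ℕ, (E ^ i * Fv ^ j * E ^ k) * Fv ∈ T := by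
    intro i j k
    induction k with
    | zero =>
      have h1 : (E ^ i * Fv ^ j * E ^ 0) * Fv = E ^ i * Fv ^ (j + 1) * E ^ 0 := by
        simp [pow_succ, mul_assoc]
      rw [h1]; exact memS i (j + 1) 0
    | succ k ih =>
      have e2 : (E ^ i * Fv ^ j * E ^ (k + 1)) * Fv
          = ((E ^ i * Fv ^ j * E ^ k) * Fv) * E + (E ^ i * Fv ^ j * E ^ k) * Hh := by
        rw [pow_succ]
        simp only [mul_assoc]
        rw [r3]
        simp only [mul_add, mul_assoc]
      rw [e2]
      exact T.add_mem (Tmul E mulE _ ih) (mulH i j k)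
  -- every ι x multiplies T into T
  have hL : ∀ (x : L), ∀ t ∈ T, t * ι F x ∈ T := by
    intro x t ht
    have hx : x = b.repr x 0 • e + b.repr x 1 • h + b.repr x 2 • f := by
      have hs := b.sum_repr x
      rw [Fin.sum_univ_three, hb0, hb1, hb2] at hs
      exact hs.symm
    rw [hx, map_add, map_add, map_smul, map_smul, map_smul, ← hE, ← hHh, ← hFv]
    rw [mul_add, mul_add, mul_smul_comm, mul_smul_comm, mul_smul_comm]
    exact T.add_mem
      (T.add_mem (T.smul_mem _ (Tmul E mulE t ht)) (T.smul_mem _ (Tmul Hh mulH t ht)))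
      (T.smul_mem _ (Tmul Fv mulF t ht))
  -- the enveloping algebra is generated by the image of ι
  have hadjT : Algebra.adjoin F
      (Set.range (TensorAlgebra.ι F : L →ₗ[F] TensorAlgebra F L)) = ⊤ := by
    rw [eq_top_iff]
    rintro x -
    induction x using TensorAlgebra.induction with
    | algebraMap r => exact Subalgebra.algebraMap_mem _ r
    | ι y => exact Algebra.subset_adjoin ⟨y, rfl⟩
    | mul a c ha hc => exact mul_mem ha hc
    | add a c ha hc => exact add_mem ha hc
  have hadj : Algebra.adjoin F
      (Set.range (fun x : L => ι F x : L → UniversalEnvelopingAlgebra F L)) = ⊤ := by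
    have hrange : (Set.range (fun x : L => ι F x : L → UniversalEnvelopingAlgebra F L))
        = (mkAlgHom F L) '' (Set.range (TensorAlgebra.ι F : L →ₗ[F] TensorAlgebra F L)) := by
      rw [← Set.range_comp]
      rfl
    rw [hrange, ← AlgHom.map_adjoin, hadjT, Algebra.map_top,
      AlgHom.range_eq_top]
    exact RingCon.mkₐ_surjective _
  have main : ∀ u ∈ Algebra.adjoin F
      (Set.range (fun x : L => ι F x : L → UniversalEnvelopingAlgebra F L)),
      ∀ t ∈ T, t * u ∈ T := by
    intro u hu
    refine Algebra.adjoin_induction ?_ ?_ ?_ ?_ hu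
    · rintro v ⟨x, rfl⟩ t ht; exact hL x t ht
    · intro r t ht
      rw [← Algebra.commutes, ← Algebra.smul_def]
      exact T.smul_mem r ht
    · intro u v _ _ hu hv t ht
      rw [mul_add]; exact T.add_mem (hu t ht) (hv t ht)
    · intro u v _ _ hu hv t ht
      rw [← mul_assoc]; exact hv _ (hu t ht)
  have h1T : (1 : UniversalEnvelopingAlgebra F L) ∈ T := by
    have := memS 0 0 0; simpa using this
  rw [eq_top_iff]
  rintro u -
  have hu : u ∈ Algebra.adjoin F
      (Set.range (fun x : L => ι F x : L → UniversalEnvelopingAlgebra F L)) := by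
    rw [hadj]; trivial
  have := main u hu 1 h1T
  simpa using this
end

section
/- Let 𝔥 be the 3-dimensional Heisenberg Lie algebra over a field F of characteristic zero with basis x, y, z satisfying [x,y]=z, [x,z]=[y,z]=0. Then in U(𝔥), for all integers i > 0 and j, k ≥ 0 one has (j+1)·y·(xⁱ y^j x^k) = (j−i+1)·xⁱ y^{j+1} x^k + i·x^{i−1} y^{j+1} x^{k+1}. -/
open UniversalEnvelopingAlgebra

attribute [local instance] LieRing.ofAssociativeRing

lemma aux_comm {F : Type*} [Field F] {A : Type*} [Ring A] [Algebra F A]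
    (X Y Z : A) (h1 : Y * X = X * Y - Z) (h2 : Z * X = X * Z) :
    ∀ n : ℕ, Y * X ^ (n + 1) = X ^ (n + 1) * Y - ((n : F) + 1) • (X ^ n * Z) := by
  intro n
  induction n with
  | zero => simpa using h1
  | succ n ih =>
      have step : Y * X ^ (n + 1 + 1) = (Y * X ^ (n + 1)) * X := by
        rw [pow_succ, ← mul_assoc]
      rw [step, ih, sub_mul, smul_mul_assoc, mul_assoc (X ^ (n + 1)) Y X, h1,
        mul_assoc (X ^ n) Z X, h2, ← mul_assoc (X ^ n) X Z, ← pow_succ,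
        mul_sub, ← mul_assoc (X ^ (n + 1)) X Y, ← pow_succ]
      push_cast
      module

/-- In U(𝔥), (j+1)·y·(xⁱ y^j x^k) =
(j−i+1)·xⁱ y^{j+1} x^k + i·x^{i−1} y^{j+1} x^{k+1}. -/
theorem stmt_7 (F : Type*) [Field F] [CharZero F]
    (L : Type*) [LieRing L] [LieAlgebra F L] (x y z : L)
    (hbasis : ∃ b : Module.Basis (Fin 3) F L, b 0 = x ∧ b 1 = y ∧ b 2 = z)
    (hxy : ⁅x, y⁆ = z) (hxz : ⁅x, z⁆ = 0) (hyz : ⁅y, z⁆ = 0)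
    (i j k : ℕ) (hi : 0 < i) :
    ((j : F) + 1) • (ι F y * ((ι F x) ^ i * (ι F y) ^ j * (ι F x) ^ k)) =
      ((j : F) - (i : F) + 1) • ((ι F x) ^ i * (ι F y) ^ (j + 1) * (ι F x) ^ k) +
        (i : F) • ((ι F x) ^ (i - 1) * (ι F y) ^ (j + 1) * (ι F x) ^ (k + 1)) := by
  obtain ⟨i', rfl⟩ : ∃ i', i = i' + 1 := ⟨i - 1, (Nat.succ_pred_eq_of_pos hi).symm⟩
  set X := ι F x with hX
  set Y := ι F y with hY
  set Z := ι F z with hZ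
  -- basic commutation relations
  have hbr : ⁅X, Y⁆ = Z := by
    rw [hX, hY, hZ, ← LieHom.map_lie (ι F) x y, hxy]
  have hcomm : X * Y - Y * X = Z := by rw [← Ring.lie_def]; exact hbr
  have hZX : Z * X = X * Z := by
    have h0 : ⁅X, Z⁆ = 0 := by
      rw [hX, hZ, ← LieHom.map_lie (ι F) x z, hxz]; exact map_zero (ι F).toLinearMap
    rw [Ring.lie_def] at h0
    exact (sub_eq_zero.mp h0).symm
  have hZY : Z * Y = Y * Z := by
    have h0 : ⁅Y, Z⁆ = 0 := by
      rw [hY, hZ, ← LieHom.map_lie (ι F) y z, hyz]; exact map_zero (ι F).toLinearMap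
    rw [Ring.lie_def] at h0
    exact (sub_eq_zero.mp h0).symm
  have hYX : Y * X = X * Y - Z := by rw [← hcomm]; exact (sub_sub_cancel _ _).symm
  have hXY : X * Y = Y * X - (-Z) := by rw [sub_neg_eq_add, ← hcomm]; abel
  have hnegZY : (-Z) * Y = Y * (-Z) := by rw [neg_mul, hZY, mul_neg]
  -- key commutators
  have e1 : Y * X ^ (i' + 1) = X ^ (i' + 1) * Y - ((i' : F) + 1) • (X ^ i' * Z) :=
    aux_comm X Y Z hYX hZX i'
  have e2' : X * Y ^ (j + 1) = Y ^ (j + 1) * X - ((j : F) + 1) • (Y ^ j * (-Z)) :=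
    aux_comm Y X (-Z) hXY hnegZY j
  have e2 : Y ^ (j + 1) * X = X * Y ^ (j + 1) - ((j : F) + 1) • (Y ^ j * Z) := by
    rw [mul_neg, smul_neg, sub_neg_eq_add] at e2'
    exact eq_sub_of_add_eq e2'.symm
  -- Z commutes with powers
  have hcZ : Z * (Y ^ j * X ^ k) = (Y ^ j * X ^ k) * Z :=
    (((show Commute Z Y from hZY).pow_right j).mul_right
      ((show Commute Z X from hZX).pow_right k)).eq
  have hZXk : Z * X ^ k = X ^ k * Z := ((show Commute Z X from hZX).pow_right k).eq
  -- rewrite the three monomials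
  have E1 : Y * (X ^ (i' + 1) * Y ^ j * X ^ k) =
      X ^ (i' + 1) * Y ^ (j + 1) * X ^ k
        - ((i' : F) + 1) • (X ^ i' * (Y ^ j * X ^ k) * Z) := by
    calc Y * (X ^ (i' + 1) * Y ^ j * X ^ k)
        = (Y * X ^ (i' + 1)) * (Y ^ j * X ^ k) := by
          rw [mul_assoc (X ^ (i' + 1)) (Y ^ j) (X ^ k), ← mul_assoc]
      _ = (X ^ (i' + 1) * Y) * (Y ^ j * X ^ k)
            - ((i' : F) + 1) • ((X ^ i' * Z) * (Y ^ j * X ^ k)) := by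
          rw [e1, sub_mul, smul_mul_assoc]
      _ = X ^ (i' + 1) * Y ^ (j + 1) * X ^ k
            - ((i' : F) + 1) • (X ^ i' * (Y ^ j * X ^ k) * Z) := by
          congr 1
          · rw [mul_assoc (X ^ (i' + 1)) Y (Y ^ j * X ^ k),
              ← mul_assoc Y (Y ^ j) (X ^ k), ← pow_succ', ← mul_assoc]
          · congr 1
            rw [mul_assoc (X ^ i') Z (Y ^ j * X ^ k), hcZ, ← mul_assoc]
  have E2 : X ^ i' * Y ^ (j + 1) * X ^ (k + 1) =
      X ^ (i' + 1) * Y ^ (j + 1) * X ^ k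
        - ((j : F) + 1) • (X ^ i' * (Y ^ j * X ^ k) * Z) := by
    calc X ^ i' * Y ^ (j + 1) * X ^ (k + 1)
        = (X ^ i' * (Y ^ (j + 1) * X)) * X ^ k := by
          rw [pow_succ' X k, ← mul_assoc, mul_assoc (X ^ i') (Y ^ (j + 1)) X]
      _ = (X ^ i' * (X * Y ^ (j + 1) - ((j : F) + 1) • (Y ^ j * Z))) * X ^ k := by
          rw [e2]
      _ = (X ^ i' * (X * Y ^ (j + 1))) * X ^ k
            - ((j : F) + 1) • ((X ^ i' * (Y ^ j * Z)) * X ^ k) := by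
          rw [mul_sub, sub_mul, mul_smul_comm, smul_mul_assoc]
      _ = X ^ (i' + 1) * Y ^ (j + 1) * X ^ k
            - ((j : F) + 1) • (X ^ i' * (Y ^ j * X ^ k) * Z) := by
          congr 1
          · rw [← mul_assoc (X ^ i') X (Y ^ (j + 1)), ← pow_succ]
          · congr 1
            rw [mul_assoc (X ^ i') (Y ^ j * Z) (X ^ k), mul_assoc (Y ^ j) Z (X ^ k),
              hZXk, ← mul_assoc (Y ^ j) (X ^ k) Z, ← mul_assoc]
  have hii : ((i' + 1 : ℕ) : F) = (i' : F) + 1 := by push_cast; ring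
  simp only [Nat.add_sub_cancel, hii]
  rw [E1, E2]
  match_scalars <;> ring
end

section
/- Let 𝔥 be the 3-dimensional Heisenberg Lie algebra over a field F of characteristic zero with basis x, y, z satisfying [x,y]=z, [x,z]=[y,z]=0. Then U(𝔥) is spanned as an F-vector space by the monomials xⁱ y^j x^k for i, j, k ≥ 0; equivalently, U(𝔥) = U(Fx)·U(Fy)·U(Fx). -/
open UniversalEnvelopingAlgebra

theorem UniversalEnvelopingAlgebra.mkAlgHom_surjective (R : Type*) [CommRing R] (L : Type*) [LieRing L]
    [LieAlgebra R L] : Function.Surjective (mkAlgHom R L) :=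
  RingCon.mkₐ_surjective (α := R) _

theorem uea_induction (R : Type*) [CommRing R] (L : Type*) [LieRing L] [LieAlgebra R L]
    {C : UniversalEnvelopingAlgebra R L → Prop}
    (halg : ∀ r, C (algebraMap R (UniversalEnvelopingAlgebra R L) r))
    (hι : ∀ x, C (ι R x))
    (hmul : ∀ a b, C a → C b → C (a * b))
    (hadd : ∀ a b, C a → C b → C (a + b))
    (a : UniversalEnvelopingAlgebra R L) : C a := by
  obtain ⟨t, rfl⟩ := UniversalEnvelopingAlgebra.mkAlgHom_surjective R L a
  induction t using TensorAlgebra.induction with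
  | algebraMap r => rw [AlgHom.commutes]; exact halg r
  | ι x => exact hι x
  | mul a b ha hb => rw [map_mul]; exact hmul _ _ ha hb
  | add a b ha hb => rw [map_add]; exact hadd _ _ ha hb

section aux
variable {U : Type*} [Ring U]

lemma aux_yx_succ {X Y Z : U} (hYX : Y * X = X * Y - Z) (hYZ : Commute Y Z) (d : ℕ) :
    Y ^ (d + 1) * X = X * Y ^ (d + 1) - ((d + 1 : ℕ) : U) * (Y ^ d * Z) := by
  induction d with
  | zero => simpa using hYX
  | succ d ih =>
    have hc : Y * (((d + 1 : ℕ) : U) * (Y ^ d * Z)) = ((d + 1 : ℕ) : U) * (Y ^ (d + 1) * Z) := by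
      rw [← mul_assoc, ← (Nat.cast_commute (d+1) Y).eq, mul_assoc, ← mul_assoc Y, ← pow_succ']
    have hz : Z * Y ^ (d + 1) = Y ^ (d + 1) * Z := ((hYZ.pow_left (d+1)).symm).eq
    calc Y ^ (d + 2) * X = Y * (Y ^ (d + 1) * X) := by rw [← mul_assoc, ← pow_succ']
      _ = Y * (X * Y ^ (d+1)) - Y * (((d + 1 : ℕ) : U) * (Y ^ d * Z)) := by rw [ih, mul_sub]
      _ = (Y * X) * Y ^ (d+1) - ((d + 1 : ℕ) : U) * (Y ^ (d + 1) * Z) := by rw [hc, mul_assoc]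
      _ = X * Y ^ (d+2) - Z * Y ^ (d+1) - ((d + 1 : ℕ) : U) * (Y ^ (d + 1) * Z) := by
            rw [hYX, sub_mul, mul_assoc, ← pow_succ']
      _ = X * Y ^ (d+2) - ((d + 2 : ℕ) : U) * (Y ^ (d + 1) * Z) := by
            rw [hz]; push_cast; noncomm_ring
end aux

section aux2
variable {U : Type*} [Ring U]

lemma aux_yx {X Y Z : U} (hYX : Y * X = X * Y - Z) (hYZ : Commute Y Z) (d : ℕ) :
    Y ^ d * X = X * Y ^ d - ((d : ℕ) : U) * (Y ^ (d - 1) * Z) := by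
  cases d with
  | zero => simp
  | succ d => simpa using aux_yx_succ hYX hYZ d

lemma aux_xy {X Y Z : U} (hYX : Y * X = X * Y - Z) (hXZ : Commute X Z) (d : ℕ) :
    Y * X ^ d = X ^ d * Y - ((d : ℕ) : U) * (X ^ (d - 1) * Z) := by
  have h1 : X * Y = Y * X - (-Z) := by rw [hYX]; noncomm_ring
  have := aux_yx (X := Y) (Y := X) (Z := -Z) h1 hXZ.neg_right d
  rw [this]
  noncomm_ring
end aux2

section aux3
variable {F : Type*} [Field F] {U : Type*} [Ring U] [Algebra F U]

lemma span_mul_right {s : Set U} {W : Submodule F U} (v : U) (h : ∀ u ∈ s, u * v ∈ W)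
    {u : U} (hu : u ∈ Submodule.span F s) : u * v ∈ W := by
  induction hu using Submodule.span_induction with
  | mem u hu => exact h u hu
  | zero => simpa using W.zero_mem
  | add a b _ _ ha hb => rw [add_mul]; exact W.add_mem ha hb
  | smul r a _ ha => rw [smul_mul_assoc]; exact W.smul_mem r ha

lemma span_mul_left {s : Set U} {W : Submodule F U} (v : U) (h : ∀ u ∈ s, v * u ∈ W)
    {u : U} (hu : u ∈ Submodule.span F s) : v * u ∈ W := by
  induction hu using Submodule.span_induction with
  | mem u hu => exact h u hu
  | zero => simpa using W.zero_mem
  | add a b _ _ ha hb => rw [mul_add]; exact W.add_mem ha hb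
  | smul r a _ ha => rw [mul_smul_comm]; exact W.smul_mem r ha

variable {X Y Z : U} (hYX : Y * X = X * Y - Z) (hXZ : Commute X Z) (hYZ : Commute Y Z)

include hXZ hYZ in
lemma eZm (a d t : ℕ) : Z * (X ^ a * Y ^ d * Z ^ t) = X ^ a * Y ^ d * Z ^ (t + 1) := by
  have h1 : Z * X ^ a = X ^ a * Z := ((hXZ.symm.pow_right a)).eq
  have h2 : Z * Y ^ d = Y ^ d * Z := ((hYZ.symm.pow_right d)).eq
  calc Z * (X ^ a * Y ^ d * Z ^ t) = (Z * X ^ a) * Y ^ d * Z ^ t := by noncomm_ring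
    _ = X ^ a * (Z * Y ^ d) * Z ^ t := by rw [h1]; noncomm_ring
    _ = X ^ a * Y ^ d * (Z * Z ^ t) := by rw [h2]; noncomm_ring
    _ = X ^ a * Y ^ d * Z ^ (t + 1) := by rw [← pow_succ']

lemma eXm (a d t : ℕ) : X * (X ^ a * Y ^ d * Z ^ t) = X ^ (a + 1) * Y ^ d * Z ^ t := by
  rw [← mul_assoc, ← mul_assoc, ← pow_succ']

include hYX hXZ hYZ in
lemma emX (a d t : ℕ) : (X ^ a * Y ^ d * Z ^ t) * X
    = X ^ (a + 1) * Y ^ d * Z ^ t - ((d : ℕ) : U) * (X ^ a * Y ^ (d - 1) * Z ^ (t + 1)) := by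
  have h1 : Z ^ t * X = X * Z ^ t := (hXZ.symm.pow_left t).eq
  calc (X ^ a * Y ^ d * Z ^ t) * X = X ^ a * (Y ^ d * X) * Z ^ t := by
        rw [mul_assoc, h1]; noncomm_ring
    _ = X ^ a * (X * Y ^ d - ((d : ℕ) : U) * (Y ^ (d - 1) * Z)) * Z ^ t := by
        rw [aux_yx hYX hYZ]
    _ = X ^ (a + 1) * Y ^ d * Z ^ t
        - ((d : ℕ) : U) * (X ^ a * (Y ^ (d - 1) * (Z * Z ^ t))) := by
        have hcc : ∀ w : U, X ^ a * (((d:ℕ):U) * w) = ((d:ℕ):U) * (X ^ a * w) := fun w => by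
          rw [← mul_assoc, ← (Nat.cast_commute (d:ℕ) (X ^ a)).eq, mul_assoc]
        simp only [mul_sub, sub_mul, mul_assoc, hcc]
        rw [← mul_assoc (X ^ a) X, ← pow_succ, ← pow_succ']
    _ = X ^ (a + 1) * Y ^ d * Z ^ t - ((d : ℕ) : U) * (X ^ a * Y ^ (d - 1) * Z ^ (t + 1)) := by
        rw [← pow_succ']; noncomm_ring

include hYX hXZ hYZ in
lemma eYm (a d t : ℕ) : Y * (X ^ a * Y ^ d * Z ^ t)
    = X ^ a * Y ^ (d + 1) * Z ^ t - ((a : ℕ) : U) * (X ^ (a - 1) * Y ^ d * Z ^ (t + 1)) := by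
  have h2 : Z * Y ^ d = Y ^ d * Z := ((hYZ.symm.pow_right d)).eq
  calc Y * (X ^ a * Y ^ d * Z ^ t) = (Y * X ^ a) * Y ^ d * Z ^ t := by noncomm_ring
    _ = (X ^ a * Y - ((a : ℕ) : U) * (X ^ (a - 1) * Z)) * Y ^ d * Z ^ t := by
        rw [aux_xy hYX hXZ]
    _ = X ^ a * (Y * Y ^ d) * Z ^ t
        - ((a : ℕ) : U) * (X ^ (a - 1) * ((Z * Y ^ d) * Z ^ t)) := by
        have hcc : ∀ w : U, (((a:ℕ):U) * (X ^ (a-1) * Z)) * w = ((a:ℕ):U) * (X ^ (a-1) * (Z * w)) := fun w => by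
          rw [mul_assoc, mul_assoc]
        simp only [sub_mul, mul_assoc, hcc]
    _ = X ^ a * Y ^ (d + 1) * Z ^ t - ((a : ℕ) : U) * (X ^ (a - 1) * Y ^ d * Z ^ (t + 1)) := by
        rw [h2, mul_assoc (Y ^ d), ← pow_succ', ← pow_succ']
        noncomm_ring
end aux3

section aux4
variable {F : Type*} [Field F] {U : Type*} [Ring U] [Algebra F U]

lemma int_cast_mul_mem {W : Submodule F U} {g : U} (hg : g ∈ W) (m : ℤ) : (m : U) * g ∈ W := by
  have h : (m : U) * g = ((m : F)) • g := by rw [Algebra.smul_def, map_intCast]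
  rw [h]; exact W.smul_mem _ hg

lemma nat_cast_mul_mem {W : Submodule F U} {g : U} (hg : g ∈ W) (m : ℕ) : (m : U) * g ∈ W := by
  have h : (m : U) * g = ((m : F)) • g := by rw [Algebra.smul_def, map_natCast]
  rw [h]; exact W.smul_mem _ hg

variable (F) in
lemma lemC {X Y Z : U} (hYX : Y * X = X * Y - Z) (hXZ : Commute X Z) (hYZ : Commute Y Z)
    (b c : ℕ) :
    Y ^ b * X ^ c - (((-1:ℤ)^c * c.factorial * b.choose c : ℤ) : U) * (Y ^ (b - c) * Z ^ c)
      ∈ Submodule.span F {u : U | ∃ a d t : ℕ, t < c ∧ u = X ^ a * Y ^ d * Z ^ t} := by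
  induction c with
  | zero => simp
  | succ c ih =>
    set m : ℤ := (-1:ℤ)^c * c.factorial * b.choose c with hm
    set m' : ℤ := (-1:ℤ)^(c+1) * (c+1).factorial * b.choose (c+1) with hm'
    set W := Submodule.span F
      {u : U | ∃ a d t : ℕ, t < c + 1 ∧ u = X ^ a * Y ^ d * Z ^ t} with hW
    have hcoef : m' = -(m * ((b - c : ℕ) : ℤ)) := by
      have h : ((b.choose (c+1) : ℤ)) * (c+1) = (b.choose c : ℤ) * ((b - c : ℕ) : ℤ) := by
        exact_mod_cast Nat.choose_succ_right_eq b c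
      rw [hm, hm', Nat.factorial_succ]
      push_cast
      linear_combination (-(-1:ℤ)^c * (c.factorial : ℤ)) * h
    -- right multiplication by X maps the span for c into W
    have hrX : ∀ u ∈ Submodule.span F
        {u : U | ∃ a d t : ℕ, t < c ∧ u = X ^ a * Y ^ d * Z ^ t}, u * X ∈ W := by
      intro u hu
      refine span_mul_right X ?_ hu
      rintro v ⟨a, d, t, ht, rfl⟩
      rw [emX hYX hXZ hYZ]
      have g1 : X ^ (a+1) * Y ^ d * Z ^ t ∈ W :=
        Submodule.subset_span ⟨a+1, d, t, by omega, rfl⟩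
      have g2 : X ^ a * Y ^ (d-1) * Z ^ (t+1) ∈ W :=
        Submodule.subset_span ⟨a, d-1, t+1, by omega, rfl⟩
      exact W.sub_mem g1 (nat_cast_mul_mem g2 d)
    have h1 : Y ^ (b-c) * Z ^ c * X
        = X * Y ^ (b-c) * Z ^ c - ((b-c : ℕ) : U) * (Y ^ (b-(c+1)) * Z ^ (c+1)) := by
      rw [mul_assoc, (hXZ.symm.pow_left c).eq, ← mul_assoc, aux_yx hYX hYZ (b-c), sub_mul,
        Nat.sub_sub, mul_assoc (((b-c:ℕ):U)), mul_assoc (Y ^ (b-(c+1))), ← pow_succ']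
    have e : Y ^ b * X ^ (c+1) - (m' : U) * (Y ^ (b-(c+1)) * Z ^ (c+1))
        = (Y ^ b * X ^ c - (m : U) * (Y ^ (b-c) * Z ^ c)) * X
          + (m : U) * (X * Y ^ (b-c) * Z ^ c) := by
      have hm'U : (m' : U) = -((m : U) * ((b - c : ℕ) : U)) := by
        rw [hcoef]; push_cast; ring_nf
      rw [sub_mul, mul_assoc (m : U), h1, pow_succ X c, hm'U]
      rw [mul_sub (m:U), ← mul_assoc (m:U), mul_assoc (m:U) _ (Z ^ c)]
      noncomm_ring
    rw [e]
    have g3 : X * Y ^ (b-c) * Z ^ c ∈ W :=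
      Submodule.subset_span ⟨1, b-c, c, Nat.lt_succ_self c, by rw [pow_one]⟩
    exact W.add_mem (hrX _ ih) (int_cast_mul_mem g3 m)
end aux4

/-- U(𝔥) is spanned by the monomials xⁱ y^j x^k, i.e.
U(𝔥) = U(Fx)·U(Fy)·U(Fx). -/
theorem stmt_8 (F : Type*) [Field F] [CharZero F]
    (L : Type*) [LieRing L] [LieAlgebra F L] (x y z : L)
    (hbasis : ∃ b : Module.Basis (Fin 3) F L, b 0 = x ∧ b 1 = y ∧ b 2 = z)
    (hxy : ⁅x, y⁆ = z) (hxz : ⁅x, z⁆ = 0) (hyz : ⁅y, z⁆ = 0) :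
    Submodule.span F
      {u : UniversalEnvelopingAlgebra F L |
        ∃ i j k : ℕ, u = (ι F x) ^ i * (ι F y) ^ j * (ι F x) ^ k} = ⊤ := by
  letI : LieRing (UniversalEnvelopingAlgebra F L) := LieRing.ofAssociativeRing
  obtain ⟨b, hb0, hb1, hb2⟩ := hbasis
  set X : UniversalEnvelopingAlgebra F L := ι F x with hX
  set Y : UniversalEnvelopingAlgebra F L := ι F y with hY
  set Z : UniversalEnvelopingAlgebra F L := ι F z with hZdef
  have hZ : Z = X * Y - Y * X := by
    rw [hZdef, ← hxy, LieHom.map_lie, Ring.lie_def]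
  have hYX : Y * X = X * Y - Z := by rw [hZ]; noncomm_ring
  have hXZ : Commute X Z := by
    have h := (ι F : L →ₗ⁅F⁆ UniversalEnvelopingAlgebra F L).map_lie (x := x) (y := z)
    rw [hxz, Ring.lie_def] at h
    have h0 : (ι F : L →ₗ⁅F⁆ UniversalEnvelopingAlgebra F L) (0:L) = 0 := by
      rw [← LieHom.coe_toLinearMap, map_zero]
    rw [h0] at h
    exact (sub_eq_zero.mp h.symm)
  have hYZ : Commute Y Z := by
    have h := (ι F : L →ₗ⁅F⁆ UniversalEnvelopingAlgebra F L).map_lie (x := y) (y := z)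
    rw [hyz, Ring.lie_def] at h
    have h0 : (ι F : L →ₗ⁅F⁆ UniversalEnvelopingAlgebra F L) (0:L) = 0 := by
      rw [← LieHom.coe_toLinearMap, map_zero]
    rw [h0] at h
    exact (sub_eq_zero.mp h.symm)
  set S := Submodule.span F
    {u : UniversalEnvelopingAlgebra F L | ∃ i j k : ℕ, u = X ^ i * Y ^ j * X ^ k} with hS
  set Tall := Submodule.span F
    {u : UniversalEnvelopingAlgebra F L | ∃ i j l : ℕ, u = X ^ i * Y ^ j * Z ^ l} with hTall
  -- Lemma B : every normal monomial lies in S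
  have lemB : ∀ l i j : ℕ, X ^ i * Y ^ j * Z ^ l ∈ S := by
    intro l
    induction l using Nat.strong_induction_on with
    | _ l IH =>
      intro i j
      have hC := lemC F hYX hXZ hYZ (j + l) l
      rw [Nat.add_sub_cancel] at hC
      set m : ℤ := (-1:ℤ)^l * l.factorial * ((j+l).choose l) with hm
      have hXi : ∀ u ∈ Submodule.span F
          {u : UniversalEnvelopingAlgebra F L | ∃ a d t : ℕ, t < l ∧ u = X^a*Y^d*Z^t},
          X^i * u ∈ S := by
        intro u hu
        refine span_mul_left (X^i) ?_ hu
        rintro v ⟨a, d, t, ht, rfl⟩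
        have h : X^i * (X^a * Y^d * Z^t) = X^(i+a) * Y^d * Z^t := by
          rw [← mul_assoc, ← mul_assoc, ← pow_add]
        rw [h]
        exact IH t ht (i+a) d
      have h2 := hXi _ hC
      have h3 : X^i * (Y^(j+l) * X^l - (m : UniversalEnvelopingAlgebra F L)*(Y^j * Z^l))
          = X^i * Y^(j+l) * X^l - (m : UniversalEnvelopingAlgebra F L) * (X^i * (Y^j * Z^l)) := by
        rw [mul_sub, ← mul_assoc, ← mul_assoc, ← (Int.cast_commute m (X^i)).eq, mul_assoc,
          mul_assoc]
      rw [h3] at h2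
      have h4 : X^i * Y^(j+l) * X^l ∈ S := by
        refine Submodule.subset_span ?_; exact ⟨i, j+l, l, rfl⟩
      have h5 : (m : UniversalEnvelopingAlgebra F L) * (X^i * (Y^j * Z^l)) ∈ S := by
        have := S.sub_mem h4 h2
        simpa using this
      have hmF : ((m : F)) ≠ 0 := by
        have hm0 : m ≠ 0 := by
          rw [hm]
          refine mul_ne_zero (mul_ne_zero (pow_ne_zero _ (by norm_num)) ?_) ?_
          · exact_mod_cast l.factorial_ne_zero
          · exact_mod_cast (Nat.choose_pos (Nat.le_add_left l j)).ne'
        exact_mod_cast hm0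
      have h6 : X^i * (Y^j * Z^l) ∈ S := by
        have he : (m : UniversalEnvelopingAlgebra F L) * (X^i * (Y^j * Z^l))
            = ((m:F)) • (X^i * (Y^j * Z^l)) := by rw [Algebra.smul_def, map_intCast]
        rw [he] at h5
        have := S.smul_mem ((m:F))⁻¹ h5
        rwa [inv_smul_smul₀ hmF] at this
      rwa [← mul_assoc] at h6
  -- Tall = ⊤
  have hone : (1 : UniversalEnvelopingAlgebra F L) ∈ Tall := by
    refine Submodule.subset_span ?_
    exact ⟨0, 0, 0, by simp⟩
  have keyX : ∀ v ∈ Tall, X * v ∈ Tall := by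
    intro v hv
    refine span_mul_left X ?_ hv
    rintro u ⟨a, d, t, rfl⟩
    rw [eXm]
    refine Submodule.subset_span ?_; exact ⟨a+1, d, t, rfl⟩
  have keyY : ∀ v ∈ Tall, Y * v ∈ Tall := by
    intro v hv
    refine span_mul_left Y ?_ hv
    rintro u ⟨a, d, t, rfl⟩
    rw [eYm hYX hXZ hYZ]
    have g1 : X ^ a * Y ^ (d+1) * Z ^ t ∈ Tall := by
      refine Submodule.subset_span ?_; exact ⟨a, d+1, t, rfl⟩
    have g2 : X ^ (a-1) * Y ^ d * Z ^ (t+1) ∈ Tall := by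
      refine Submodule.subset_span ?_; exact ⟨a-1, d, t+1, rfl⟩
    exact Tall.sub_mem g1 (nat_cast_mul_mem g2 a)
  have keyZ : ∀ v ∈ Tall, Z * v ∈ Tall := by
    intro v hv
    refine span_mul_left Z ?_ hv
    rintro u ⟨a, d, t, rfl⟩
    rw [eZm hXZ hYZ]
    refine Submodule.subset_span ?_; exact ⟨a, d, t+1, rfl⟩
  have keyι : ∀ w : L, ∀ v ∈ Tall, ι F w * v ∈ Tall := by
    intro w
    have hw : ι F w ∈ Submodule.span F ({X, Y, Z} : Set (UniversalEnvelopingAlgebra F L)) := by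
      have hwL : w ∈ Submodule.span F ({x, y, z} : Set L) := by
        have hr : Set.range b ⊆ ({x, y, z} : Set L) := by
          rintro _ ⟨i, rfl⟩
          fin_cases i <;> simp [hb0, hb1, hb2]
        have : (⊤ : Submodule F L) ≤ Submodule.span F ({x, y, z} : Set L) := by
          rw [← b.span_eq]
          exact Submodule.span_le.mpr (fun u hu => Submodule.subset_span (hr hu))
        exact this trivial
      have := Submodule.mem_map_of_mem (f := (ι F : L →ₗ⁅F⁆ _).toLinearMap) hwL
      rw [Submodule.map_span] at this
      refine Submodule.span_le.mpr ?_ this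
      rintro _ ⟨u, hu, rfl⟩
      rcases hu with h | h | h <;> subst h <;>
        exact Submodule.subset_span (by simp [hX, hY, hZdef])
    refine Submodule.span_induction
      (p := fun u _ => ∀ v ∈ Tall, u * v ∈ Tall) ?_ ?_ ?_ ?_ hw
    · intro u hu
      rcases hu with h | h | h <;> subst h
      · exact keyX
      · exact keyY
      · exact keyZ
    · intro v hv; simpa using Tall.zero_mem
    · intro a c _ _ ha hc v hv; rw [add_mul]; exact Tall.add_mem (ha v hv) (hc v hv)
    · intro r a _ ha v hv; rw [smul_mul_assoc]; exact Tall.smul_mem r (ha v hv)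
  have key : ∀ u : UniversalEnvelopingAlgebra F L, ∀ v ∈ Tall, u * v ∈ Tall := by
    intro u
    refine uea_induction F L (C := fun u => ∀ v ∈ Tall, u * v ∈ Tall) ?_ ?_ ?_ ?_ u
    · intro r v hv
      rw [← Algebra.smul_def]
      exact Tall.smul_mem r hv
    · intro w
      intro v hv
      exact keyι w v hv
    · intro a c ha hc v hv
      rw [mul_assoc]
      exact ha _ (hc v hv)
    · intro a c ha hc v hv
      rw [add_mul]
      exact Tall.add_mem (ha v hv) (hc v hv)
  have hTallTop : Tall = ⊤ := by
    rw [eq_top_iff]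
    intro u _
    have := key u 1 hone
    rwa [mul_one] at this
  rw [eq_top_iff, ← hTallTop, hTall]
  refine Submodule.span_le.mpr ?_
  rintro _ ⟨i, j, l, rfl⟩
  exact lemB l i j
end

section
/- Let L be a three-dimensional Lie algebra over a field F of characteristic zero that is generated (as a Lie algebra) by two elements x and y. Then U(L) is spanned as an F-vector space by the monomials xⁱ y^j x^k for i, j, k ≥ 0, i.e., U(L) = U(Fx)·U(Fy)·U(Fx). -/
open UniversalEnvelopingAlgebra


set_option linter.unusedSectionVars false
section core
variable {F : Type*} [Field F] [CharZero F] {U : Type*} [Ring U] [Algebra F U]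

/-- span of the monomials X^i Y^j X^k -/
def SSpan (F : Type*) [Field F] {U : Type*} [Ring U] [Algebra F U] (X Y : U) : Submodule F U :=
  Submodule.span F {u : U | ∃ i j k : ℕ, u = X ^ i * Y ^ j * X ^ k}

lemma mem_SSpan (X Y : U) (i j k : ℕ) : X ^ i * (Y ^ j * X ^ k) ∈ SSpan F X Y :=
  Submodule.subset_span ⟨i, j, k, (mul_assoc _ _ _).symm⟩

lemma peelR {v : U} (s : ℕ) (w : U) : v ^ (s+1) * w = v ^ s * (v * w) := by
  rw [pow_succ, mul_assoc]

lemma peelL {v : U} (s : ℕ) (w : U) : v ^ (s+1) * w = v * (v ^ s * w) := by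
  rw [pow_succ', mul_assoc]

variable {X Y Z : U}

lemma swapYX (hZ : Z = X * Y - Y * X) (w : U) :
    Y * (X * w) = X * (Y * w) - Z * w := by
  have h : Y * X = X * Y - Z := by rw [hZ]; abel
  calc Y * (X * w) = (Y * X) * w := by rw [mul_assoc]
  _ = (X * Y - Z) * w := by rw [h]
  _ = X * (Y * w) - Z * w := by rw [sub_mul, mul_assoc]

lemma swapMid {q₁ q₂ q₃ : F} {V W : U} (h : V * W - W * V = q₁ • X + q₂ • Y + q₃ • Z) (w : U) :
    V * (W * w) = W * (V * w) + (q₁ • (X * w) + q₂ • (Y * w) + q₃ • (Z * w)) := by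
  have h' : V * W = W * V + (q₁ • X + q₂ • Y + q₃ • Z) := by rw [← h]; abel
  calc V * (W * w) = (V * W) * w := by rw [mul_assoc]
  _ = (W * V + (q₁ • X + q₂ • Y + q₃ • Z)) * w := by rw [h']
  _ = W * (V * w) + (q₁ • (X * w) + q₂ • (Y * w) + q₃ • (Z * w)) := by
      simp only [add_mul, smul_mul_assoc, mul_assoc]
end core

section core2
variable {F : Type*} [Field F] [CharZero F] {U : Type*} [Ring U] [Algebra F U]
variable {X Y Z : U}

lemma pows {v : U} (a b : ℕ) (w : U) : v ^ a * (v ^ b * w) = v ^ (a+b) * w := by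
  rw [← mul_assoc, ← pow_add]

lemma lemN (hZ : Z = X * Y - Y * X) {q₁ q₂ q₃ : F}
    (hq : Z * Y - Y * Z = q₁ • X + q₂ • Y + q₃ • Z) :
    ∀ t m a b k : ℕ, a + b = t → X ^ m * (Y ^ a * (Z * (Y ^ b * X ^ k))) ∈ SSpan F X Y := by
  intro t
  induction t using Nat.strong_induction_on with
  | _ t IH =>
  -- middle-X lemma
  have hXmid : ∀ α β m k : ℕ, α + β + 1 ≤ t →
      X ^ m * (Y ^ α * (X * (Y ^ β * X ^ k))) ∈ SSpan F X Y := by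
    intro α
    induction α with
    | zero =>
      intro β m k _
      have h : X ^ m * (X * (Y ^ β * X ^ k)) ∈ SSpan F X Y := by
        rw [← peelR]; exact mem_SSpan X Y (m+1) β k
      simpa using h
    | succ α IHα =>
      intro β m k hle
      rw [peelR α (X * (Y ^ β * X ^ k)), swapYX hZ, ← peelL, mul_sub, mul_sub]
      exact sub_mem (IHα (β+1) m k (by omega)) (IH (α + β) (by omega) m α β k rfl)
  -- reduction lemma
  have hred : ∀ b a m k : ℕ, a + b = t →
      X ^ m * (Y ^ a * (Z * (Y ^ b * X ^ k))) - X ^ m * (Y ^ t * (Z * X ^ k)) ∈ SSpan F X Y := by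
    intro b
    induction b with
    | zero =>
      intro a m k hab
      have ha : a = t := by omega
      subst ha
      simpa using Submodule.zero_mem (SSpan F X Y)
    | succ b IHb =>
      intro a m k hab
      rw [peelL b (X ^ k), swapMid hq, mul_add, mul_add, ← peelR a (Z * (Y ^ b * X ^ k))]
      simp only [mul_add, mul_smul_comm]
      rw [add_sub_right_comm]
      refine add_mem (IHb (a+1) m k (by omega)) (add_mem (add_mem ?_ ?_) ?_)
      · exact Submodule.smul_mem _ _ (hXmid a b m k (by omega))
      · have h2 : X ^ m * (Y ^ a * (Y ^ (b+1) * X ^ k)) ∈ SSpan F X Y := by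
          rw [pows]; exact mem_SSpan X Y m (a + (b+1)) k
        rw [peelL] at h2
        exact Submodule.smul_mem _ _ h2
      · exact Submodule.smul_mem _ _ (IH (a + b) (by omega) m a b k rfl)
  -- main element
  have hmain : ∀ m k : ℕ, X ^ m * (Y ^ t * (Z * X ^ k)) ∈ SSpan F X Y := by
    intro m k
    have hc : ∀ s : ℕ, s ≤ t + 1 →
        X ^ m * (Y ^ (t+1) * X ^ (k+1)) - X ^ m * (Y ^ (t+1-s) * (X * (Y ^ s * X ^ k)))
          + s • (X ^ m * (Y ^ t * (Z * X ^ k))) ∈ SSpan F X Y := by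
      intro s
      induction s with
      | zero =>
        intro _
        have e : X * (Y ^ 0 * X ^ k) = X ^ (k+1) := by
          rw [pow_zero, one_mul, ← pow_succ']
        rw [e]
        simpa using Submodule.zero_mem (SSpan F X Y)
      | succ s IHs =>
        intro hs
        have key : X ^ m * (Y ^ (t+1-s) * (X * (Y ^ s * X ^ k)))
            = X ^ m * (Y ^ (t+1-(s+1)) * (X * (Y ^ (s+1) * X ^ k)))
              - X ^ m * (Y ^ (t-s) * (Z * (Y ^ s * X ^ k))) := by
          have e1 : t + 1 - s = (t - s) + 1 := by omega
          have e2 : t + 1 - (s+1) = t - s := by omega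
          rw [e1, e2, peelR, swapYX hZ, ← peelL, mul_sub, mul_sub]
        have hmem := sub_mem (IHs (by omega)) (hred s (t - s) m k (by omega))
        convert hmem using 1
        rw [key, succ_nsmul]
        abel
    have h0 := hc (t+1) le_rfl
    have h1 : X ^ m * (Y ^ (t+1) * X ^ (k+1)) ∈ SSpan F X Y := mem_SSpan X Y m (t+1) (k+1)
    have h2 : X ^ m * (Y ^ (t+1-(t+1)) * (X * (Y ^ (t+1) * X ^ k))) ∈ SSpan F X Y := by
      simp only [Nat.sub_self, pow_zero, one_mul]
      rw [← peelR]
      exact mem_SSpan X Y (m+1) (t+1) k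
    have h3 : (t+1) • (X ^ m * (Y ^ t * (Z * X ^ k))) ∈ SSpan F X Y := by
      have e : (t+1) • (X ^ m * (Y ^ t * (Z * X ^ k)))
          = (X ^ m * (Y ^ (t+1) * X ^ (k+1))
              - X ^ m * (Y ^ (t+1-(t+1)) * (X * (Y ^ (t+1) * X ^ k)))
              + (t+1) • (X ^ m * (Y ^ t * (Z * X ^ k))))
            - X ^ m * (Y ^ (t+1) * X ^ (k+1))
            + X ^ m * (Y ^ (t+1-(t+1)) * (X * (Y ^ (t+1) * X ^ k))) := by abel
      rw [e]
      exact add_mem (sub_mem h0 h1) h2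
    have hcast : ((t+1 : ℕ) : F) ≠ 0 := Nat.cast_ne_zero.2 (Nat.succ_ne_zero t)
    have e : X ^ m * (Y ^ t * (Z * X ^ k))
        = ((t+1 : ℕ) : F)⁻¹ • ((t+1) • (X ^ m * (Y ^ t * (Z * X ^ k)))) := by
      rw [← Nat.cast_smul_eq_nsmul F, inv_smul_smul₀ hcast]
    rw [e]
    exact Submodule.smul_mem _ _ h3
  intro m a b k hab
  rw [← sub_add_cancel (X ^ m * (Y ^ a * (Z * (Y ^ b * X ^ k)))) (X ^ m * (Y ^ t * (Z * X ^ k)))]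
  exact add_mem (hred b a m k hab) (hmain m k)

end core2

section core3
variable {F : Type*} [Field F] [CharZero F] {U : Type*} [Ring U] [Algebra F U]
variable {X Y Z : U}

lemma lemHK (hZ : Z = X * Y - Y * X) {q₁ q₂ q₃ : F}
    (hq : Z * Y - Y * Z = q₁ • X + q₂ • Y + q₃ • Z) {p₁ p₂ p₃ : F}
    (hp : Z * X - X * Z = p₁ • X + p₂ • Y + p₃ • Z) :
    ∀ b : ℕ, (∀ a j k : ℕ, X ^ a * (Z * (X ^ b * (Y ^ j * X ^ k))) ∈ SSpan F X Y)
      ∧ (∀ a j k : ℕ, X ^ a * (Y * (X ^ b * (Y ^ j * X ^ k))) ∈ SSpan F X Y) := by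
  intro b
  induction b with
  | zero =>
    constructor
    · intro a j k
      have h := lemN hZ hq j a 0 j k (by omega)
      simpa using h
    · intro a j k
      have h : X ^ a * (Y ^ (j+1) * X ^ k) ∈ SSpan F X Y := mem_SSpan X Y a (j+1) k
      rw [peelL] at h
      simpa using h
  | succ b IHb =>
    obtain ⟨IHH, IHK⟩ := IHb
    constructor
    · intro a j k
      rw [peelL b (Y ^ j * X ^ k), swapMid hp, mul_add]
      simp only [mul_add, mul_smul_comm]
      refine add_mem ?_ (add_mem (add_mem ?_ ?_) ?_)
      · rw [← peelR]; exact IHH (a+1) j k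
      · have h : X ^ a * (X ^ (b+1) * (Y ^ j * X ^ k)) ∈ SSpan F X Y := by
          rw [pows]; exact mem_SSpan X Y (a + (b+1)) j k
        rw [peelL] at h
        exact Submodule.smul_mem _ _ h
      · exact Submodule.smul_mem _ _ (IHK a j k)
      · exact Submodule.smul_mem _ _ (IHH a j k)
    · intro a j k
      rw [peelL b (Y ^ j * X ^ k), swapYX hZ, mul_sub]
      refine sub_mem ?_ (IHH a j k)
      rw [← peelR]
      exact IHK (a+1) j k

lemma Xcl : ∀ s ∈ SSpan F X Y, X * s ∈ SSpan F X Y := by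
  intro s hs
  have hle : SSpan F X Y ≤ (SSpan F X Y).comap (LinearMap.mulLeft F X) := by
    rw [SSpan, Submodule.span_le]
    rintro u ⟨i, j, k, rfl⟩
    have h : X * (X ^ i * Y ^ j * X ^ k) = X ^ (i+1) * Y ^ j * X ^ k := by
      rw [mul_assoc (X ^ i), mul_assoc (X ^ (i+1)), peelL]
    simp only [SetLike.mem_coe, Submodule.mem_comap, LinearMap.mulLeft_apply, h]
    rw [mul_assoc]
    exact mem_SSpan X Y (i+1) j k
  exact hle hs

lemma Ycl (hZ : Z = X * Y - Y * X) {q₁ q₂ q₃ : F}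
    (hq : Z * Y - Y * Z = q₁ • X + q₂ • Y + q₃ • Z) {p₁ p₂ p₃ : F}
    (hp : Z * X - X * Z = p₁ • X + p₂ • Y + p₃ • Z) :
    ∀ s ∈ SSpan F X Y, Y * s ∈ SSpan F X Y := by
  intro s hs
  have hgen : ∀ i j k : ℕ, Y * (X ^ i * (Y ^ j * X ^ k)) ∈ SSpan F X Y := by
    intro i j k
    have h := (lemHK hZ hq hp i).2 0 j k
    rwa [pow_zero, one_mul] at h
  have hle : SSpan F X Y ≤ (SSpan F X Y).comap (LinearMap.mulLeft F Y) := by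
    rw [SSpan, Submodule.span_le]
    rintro u ⟨i, j, k, rfl⟩
    simp only [SetLike.mem_coe, Submodule.mem_comap, LinearMap.mulLeft_apply]
    rw [mul_assoc]
    exact hgen i j k
  exact hle hs

lemma Zcl (hZ : Z = X * Y - Y * X) {q₁ q₂ q₃ : F}
    (hq : Z * Y - Y * Z = q₁ • X + q₂ • Y + q₃ • Z) {p₁ p₂ p₃ : F}
    (hp : Z * X - X * Z = p₁ • X + p₂ • Y + p₃ • Z) :
    ∀ s ∈ SSpan F X Y, Z * s ∈ SSpan F X Y := by
  intro s hs
  have hgen : ∀ i j k : ℕ, Z * (X ^ i * (Y ^ j * X ^ k)) ∈ SSpan F X Y := by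
    intro i j k
    have h := (lemHK hZ hq hp i).1 0 j k
    rwa [pow_zero, one_mul] at h
  have hle : SSpan F X Y ≤ (SSpan F X Y).comap (LinearMap.mulLeft F Z) := by
    rw [SSpan, Submodule.span_le]
    rintro u ⟨i, j, k, rfl⟩
    simp only [SetLike.mem_coe, Submodule.mem_comap, LinearMap.mulLeft_apply]
    rw [mul_assoc]
    exact hgen i j k
  exact hle hs

end core3

section linalg
variable {F : Type*} [Field F] {L : Type*} [LieRing L] [LieAlgebra F L]

lemma span_bracket_closed (s : Set L)
    (h : ∀ a ∈ s, ∀ b ∈ s, ⁅a, b⁆ ∈ Submodule.span F s) :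
    ∀ a ∈ Submodule.span F s, ∀ b ∈ Submodule.span F s, ⁅a, b⁆ ∈ Submodule.span F s := by
  have step1 : ∀ a ∈ s, ∀ b ∈ Submodule.span F s, ⁅a, b⁆ ∈ Submodule.span F s := by
    intro a ha b hb
    have hle : Submodule.span F s ≤ (Submodule.span F s).comap ((LieAlgebra.ad F L) a) := by
      rw [Submodule.span_le]
      intro g hg
      simp only [SetLike.mem_coe, Submodule.mem_comap, LieAlgebra.ad_apply]
      exact h a ha g hg
    have := hle hb
    simpa only [Submodule.mem_comap, LieAlgebra.ad_apply] using this
  intro a ha b hb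
  have hle : Submodule.span F s ≤ (Submodule.span F s).comap (-((LieAlgebra.ad F L) b)) := by
    rw [Submodule.span_le]
    intro g hg
    simp only [SetLike.mem_coe, Submodule.mem_comap, LinearMap.neg_apply, LieAlgebra.ad_apply]
    rw [lie_skew]
    exact step1 g hg b hb
  have := hle ha
  simp only [Submodule.mem_comap, LinearMap.neg_apply, LieAlgebra.ad_apply] at this
  rwa [lie_skew] at this

lemma top_le_span_of_closed {x y : L}
    (hgen : LieSubalgebra.lieSpan F L {x, y} = ⊤) (s : Set L)
    (h : ∀ a ∈ s, ∀ b ∈ s, ⁅a, b⁆ ∈ Submodule.span F s)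
    (hx : x ∈ Submodule.span F s) (hy : y ∈ Submodule.span F s) :
    ∀ w : L, w ∈ Submodule.span F s := by
  let K : LieSubalgebra F L :=
    { Submodule.span F s with
      lie_mem' := fun {a b} ha hb => span_bracket_closed s h a ha b hb }
  have hle : LieSubalgebra.lieSpan F L {x, y} ≤ K := by
    rw [LieSubalgebra.lieSpan_le]
    rintro w (rfl | rfl)
    · exact hx
    · exact hy
  rw [hgen] at hle
  intro w
  exact hle (LieSubalgebra.mem_top w)

lemma span_xyz_top [Module.Finite F L] (hdim : Module.finrank F L = 3) (x y : L)
    (hgen : LieSubalgebra.lieSpan F L {x, y} = ⊤) :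
    Submodule.span F {x, y, ⁅x, y⁆} = ⊤ := by
  classical
  have hcard : ∀ (s : Set L) [Fintype s], (∀ w : L, w ∈ Submodule.span F s) →
      3 ≤ s.toFinset.card := by
    intro s _ hs
    have e : Submodule.span F s = ⊤ := top_le_iff.mp (fun w _ => hs w)
    have h := finrank_span_le_card (R := F) s
    rw [e, finrank_top, hdim] at h
    exact h
  have hx0 : x ≠ 0 := by
    intro hx
    have h := hcard {y} (top_le_span_of_closed hgen {y}
      (by rintro a rfl b rfl; simp)
      (by rw [hx]; exact Submodule.zero_mem _) (Submodule.subset_span rfl))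
    simp at h
  have hyx : y ∉ Submodule.span F {x} := by
    intro hy
    have h := hcard {x} (top_le_span_of_closed hgen {x}
      (by rintro a rfl b rfl; simp)
      (Submodule.subset_span rfl) hy)
    simp at h
  have hz : ⁅x, y⁆ ∉ Submodule.span F {x, y} := by
    intro hbr
    have h := hcard {x, y} (top_le_span_of_closed hgen {x, y}
      (by
        rintro a (rfl | rfl) b (rfl | rfl)
        · simp
        · exact hbr
        · rw [← lie_skew]; exact Submodule.neg_mem _ hbr
        · simp)
      (Submodule.subset_span (Set.mem_insert _ _))
      (Submodule.subset_span (Set.mem_insert_of_mem _ rfl)))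
    have : ({x, y} : Set L).toFinset.card ≤ 2 := by
      rw [Set.toFinset_insert, Set.toFinset_singleton]
      exact (Finset.card_insert_le _ _).trans (by simp)
    omega
  have li : LinearIndependent F ![x, y, ⁅x, y⁆] := by
    have e3 : ![x, y, ⁅x, y⁆] = Fin.snoc ![x, y] ⁅x, y⁆ := by
      funext i; fin_cases i <;> simp [Fin.snoc] <;> rfl
    have e2 : ![x, y] = Fin.snoc ![x] y := by
      funext i; fin_cases i <;> simp [Fin.snoc] <;> rfl
    have hr1 : Set.range ![x] = {x} := by
      ext w
      simp only [Set.mem_range, Set.mem_singleton_iff]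
      constructor
      · rintro ⟨i, rfl⟩; fin_cases i <;> simp
      · rintro rfl; exact ⟨0, rfl⟩
    have hr2 : Set.range ![x, y] = {x, y} := by
      ext w
      simp only [Set.mem_range, Set.mem_insert_iff, Set.mem_singleton_iff]
      constructor
      · rintro ⟨i, rfl⟩; fin_cases i <;> simp
      · rintro (rfl | rfl)
        exacts [⟨0, rfl⟩, ⟨1, rfl⟩]
    rw [e3, linearIndependent_fin_snoc, hr2, e2, linearIndependent_fin_snoc, hr1]
    exact ⟨⟨linearIndependent_unique_iff.mpr (by simpa using hx0), hyx⟩, hz⟩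
  have hr3 : Set.range ![x, y, ⁅x, y⁆] = {x, y, ⁅x, y⁆} := by
    ext w
    simp only [Set.mem_range, Set.mem_insert_iff, Set.mem_singleton_iff]
    constructor
    · rintro ⟨i, rfl⟩; fin_cases i <;> simp
    · rintro (rfl | rfl | rfl)
      exacts [⟨0, rfl⟩, ⟨1, rfl⟩, ⟨2, rfl⟩]
  have hfr : Module.finrank F (Submodule.span F {x, y, ⁅x, y⁆}) = 3 := by
    rw [← hr3, finrank_span_eq_card li]
    simp
  exact Submodule.eq_top_of_finrank_eq (by rw [hfr, hdim])

lemma mem_span_triple {x y z w : L} (h : w ∈ Submodule.span F {x, y, z}) :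
    ∃ a b c : F, w = a • x + b • y + c • z := by
  rw [Submodule.mem_span_insert] at h
  obtain ⟨a, u, hu, rfl⟩ := h
  rw [Submodule.mem_span_pair] at hu
  obtain ⟨b, c, rfl⟩ := hu
  exact ⟨a, b, c, by rw [add_assoc]⟩

end linalg


/-- If a three-dimensional Lie algebra L is generated by x and y,
then U(L) is spanned by the monomials xⁱ y^j x^k. -/
theorem stmt_11 (F : Type*) [Field F] [CharZero F]
    (L : Type*) [LieRing L] [LieAlgebra F L] [Module.Finite F L]
    (hdim : Module.finrank F L = 3) (x y : L)
    (hgen : LieSubalgebra.lieSpan F L {x, y} = ⊤) :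
    Submodule.span F
      {u : UniversalEnvelopingAlgebra F L |
        ∃ i j k : ℕ, u = (ι F x) ^ i * (ι F y) ^ j * (ι F x) ^ k} = ⊤ := by
  set X : UniversalEnvelopingAlgebra F L := ι F x with hX
  set Y : UniversalEnvelopingAlgebra F L := ι F y with hY
  set Z : UniversalEnvelopingAlgebra F L := ι F ⁅x, y⁆ with hZZ
  have hZ : Z = X * Y - Y * X := by
    letI : LieRing (UniversalEnvelopingAlgebra F L) := LieRing.ofAssociativeRing
    rw [hZZ, LieHom.map_lie, Ring.lie_def]
  have htop := span_xyz_top hdim x y hgen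
  have hrel : ∀ w : L, ∃ a b c : F, ι F w = a • X + b • Y + c • Z := by
    intro w
    have hw : w ∈ Submodule.span F {x, y, ⁅x, y⁆} := htop ▸ Submodule.mem_top
    obtain ⟨a, b, c, hw⟩ := mem_span_triple hw
    refine ⟨a, b, c, ?_⟩
    rw [hw, map_add, map_add, map_smul, map_smul, map_smul]
  obtain ⟨q₁, q₂, q₃, hqw⟩ := hrel ⁅⁅x, y⁆, y⁆
  have hq : Z * Y - Y * Z = q₁ • X + q₂ • Y + q₃ • Z := by
    letI : LieRing (UniversalEnvelopingAlgebra F L) := LieRing.ofAssociativeRing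
    rw [← hqw, LieHom.map_lie, Ring.lie_def]
  obtain ⟨p₁, p₂, p₃, hpw⟩ := hrel ⁅⁅x, y⁆, x⁆
  have hp : Z * X - X * Z = p₁ • X + p₂ • Y + p₃ • Z := by
    letI : LieRing (UniversalEnvelopingAlgebra F L) := LieRing.ofAssociativeRing
    rw [← hpw, LieHom.map_lie, Ring.lie_def]
  show SSpan F X Y = ⊤
  have hone : (1 : UniversalEnvelopingAlgebra F L) ∈ SSpan F X Y := by
    have h := mem_SSpan (F := F) X Y 0 0 0
    simpa using h
  have hwmul : ∀ w : L, ∀ s ∈ SSpan F X Y, ι F w * s ∈ SSpan F X Y := by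
    intro w s hs
    obtain ⟨a, b, c, hw⟩ := hrel w
    rw [hw, add_mul, add_mul, smul_mul_assoc, smul_mul_assoc, smul_mul_assoc]
    exact add_mem (add_mem (Submodule.smul_mem _ _ (Xcl s hs))
      (Submodule.smul_mem _ _ (Ycl hZ hq hp s hs)))
      (Submodule.smul_mem _ _ (Zcl hZ hq hp s hs))
  have key : ∀ t : TensorAlgebra F L, ∀ s ∈ SSpan F X Y,
      mkAlgHom F L t * s ∈ SSpan F X Y := by
    intro t
    induction t using TensorAlgebra.induction with
    | algebraMap r =>
      intro s hs
      rw [AlgHom.commutes, ← Algebra.smul_def]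
      exact Submodule.smul_mem _ _ hs
    | ι m =>
      intro s hs
      exact hwmul m s hs
    | mul a b ha hb =>
      intro s hs
      rw [map_mul, mul_assoc]
      exact ha _ (hb s hs)
    | add a b ha hb =>
      intro s hs
      rw [map_add, add_mul]
      exact add_mem (ha s hs) (hb s hs)
  rw [eq_top_iff]
  intro u _
  obtain ⟨t, rfl⟩ : ∃ t, mkAlgHom F L t = u := RingCon.mkₐ_surjective _ u
  have h := key t 1 hone
  simpa using h
end

section
/- Let L be a three-dimensional Lie algebra over a field F of characteristic zero with a plus-minus pair (P, M). Then both P and M are one-dimensional subspaces of L, and the elements spanning P and M generate L as a Lie algebra. -/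
open UniversalEnvelopingAlgebra

open UniversalEnvelopingAlgebra

section Helpers

variable {F : Type*} [Field F] {L : Type*} [LieRing L] [LieAlgebra F L]

/-- The stabilizer of a submodule, as a subalgebra of endomorphisms. -/
def endStab (N : Submodule F L) : Subalgebra F (Module.End F L) where
  carrier := {f | ∀ x ∈ N, f x ∈ N}
  mul_mem' := fun ha hb x hx => ha _ (hb x hx)
  add_mem' := fun ha hb x hx => N.add_mem (ha x hx) (hb x hx)
  one_mem' := fun x hx => hx
  zero_mem' := fun x _ => by simpa using N.zero_mem
  algebraMap_mem' := fun c x hx => by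
    simpa [Module.algebraMap_end_apply] using N.smul_mem c hx

theorem mem_endStab {N : Submodule F L} {f : Module.End F L} :
    f ∈ endStab N ↔ ∀ x ∈ N, f x ∈ N := Iff.rfl

end Helpers

section Main

variable {F : Type*} [Field F] {L : Type*} [LieRing L] [LieAlgebra F L]

theorem push_lemma {A : Type*} [Ring A] [Algebra F A] (P M : LieSubalgebra F L)
    (hspan : Submodule.span F
      {u : UniversalEnvelopingAlgebra F L |
        ∃ p ∈ Algebra.adjoin F (ι F '' (P : Set L)),
          ∃ m ∈ Algebra.adjoin F (ι F '' (M : Set L)),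
            ∃ q ∈ Algebra.adjoin F (ι F '' (P : Set L)), u = p * m * q} = ⊤)
    (ψ : UniversalEnvelopingAlgebra F L →ₐ[F] A) (T : Subalgebra F A)
    (hP : ∀ p ∈ P, ψ (ι F p) ∈ T) (hM : ∀ m ∈ M, ψ (ι F m) ∈ T) :
    ∀ u, ψ u ∈ T := by
  have hsub : ∀ N : LieSubalgebra F L, (∀ n ∈ N, ψ (ι F n) ∈ T) →
      ∀ a ∈ Algebra.adjoin F (ι F '' (N : Set L)), ψ a ∈ T := by
    intro N hN a ha
    have h1 : ψ a ∈ (Algebra.adjoin F (ι F '' (N : Set L))).map ψ := ⟨a, ha, rfl⟩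
    rw [AlgHom.map_adjoin] at h1
    refine Algebra.adjoin_le ?_ h1
    rintro _ ⟨_, ⟨n, hn, rfl⟩, rfl⟩
    exact hN n hn
  intro u
  have hle : Submodule.span F
      {u : UniversalEnvelopingAlgebra F L |
        ∃ p ∈ Algebra.adjoin F (ι F '' (P : Set L)),
          ∃ m ∈ Algebra.adjoin F (ι F '' (M : Set L)),
            ∃ q ∈ Algebra.adjoin F (ι F '' (P : Set L)), u = p * m * q} ≤
      (Subalgebra.toSubmodule T).comap ψ.toLinearMap := by
    rw [Submodule.span_le]
    rintro _ ⟨p, hp, m, hm, q, hq, rfl⟩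
    refine Submodule.mem_comap.mpr ?_
    show ψ (p * m * q) ∈ Subalgebra.toSubmodule T
    rw [map_mul, map_mul]
    exact T.mul_mem (T.mul_mem (hsub P hP p hp) (hsub M hM m hm)) (hsub P hP q hq)
  have := hle (hspan ▸ Submodule.mem_top (x := u))
  simpa using this

/-- In a Lie algebra of dimension 1 or 2, the span of brackets is proper. -/
theorem small_commutator {Q : Type*} [LieRing Q] [LieAlgebra F Q] [Module.Finite F Q]
    (h1 : 1 ≤ Module.finrank F Q) (h2 : Module.finrank F Q ≤ 2) :
    Submodule.span F {z : Q | ∃ x y : Q, ⁅x, y⁆ = z} ≠ ⊤ := by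
  obtain h | h : Module.finrank F Q = 1 ∨ Module.finrank F Q = 2 := by omega
  · -- dim 1
    have b := Module.finBasisOfFinrankEq F Q h
    have habel : ∀ x y : Q, ⁅x, y⁆ = 0 := by
      intro x y
      have hx : x = b.repr x 0 • b 0 := by
        conv_lhs => rw [← b.sum_repr x]
        simp [Fin.sum_univ_one]
      have hy : y = b.repr y 0 • b 0 := by
        conv_lhs => rw [← b.sum_repr y]
        simp [Fin.sum_univ_one]
      rw [hx, hy]
      simp
    have hle : Submodule.span F {z : Q | ∃ x y : Q, ⁅x, y⁆ = z} ≤ ⊥ := by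
      rw [Submodule.span_le]
      rintro _ ⟨x, y, rfl⟩
      simp [habel x y]
    intro htop
    rw [htop] at hle
    have h0 : (⊤ : Submodule F Q) = ⊥ := le_bot_iff.mp hle
    have : Module.finrank F Q = 0 := by rw [← finrank_top F Q, h0, finrank_bot]
    omega
  · -- dim 2
    have b := Module.finBasisOfFinrankEq F Q h
    have hbr : ∀ x y : Q, ⁅x, y⁆ ∈ Submodule.span F {⁅b 0, b 1⁆} := by
      intro x y
      have hx : x = b.repr x 0 • b 0 + b.repr x 1 • b 1 := by
        conv_lhs => rw [← b.sum_repr x]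
        simp only [Fin.sum_univ_two]
      have hy : y = b.repr y 0 • b 0 + b.repr y 1 • b 1 := by
        conv_lhs => rw [← b.sum_repr y]
        simp only [Fin.sum_univ_two]
      refine Submodule.mem_span_singleton.mpr
        ⟨b.repr x 0 * b.repr y 1 - b.repr x 1 * b.repr y 0, ?_⟩
      conv_rhs => rw [hx, hy]
      simp only [add_lie, lie_add, smul_lie, lie_smul, lie_self, smul_zero, zero_add, add_zero]
      rw [← lie_skew (b 1) (b 0)]
      module
    intro htop
    have hle : Submodule.span F {z : Q | ∃ x y : Q, ⁅x, y⁆ = z} ≤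
        Submodule.span F {⁅b 0, b 1⁆} := by
      rw [Submodule.span_le]
      rintro _ ⟨x, y, rfl⟩
      exact hbr x y
    rw [htop, top_le_iff] at hle
    have hfr : Module.finrank F Q ≤ 1 := by
      calc Module.finrank F Q = Module.finrank F (⊤ : Submodule F Q) := (finrank_top F Q).symm
        _ ≤ 1 := by
          rw [← hle]
          simpa using finrank_span_le_card ({⁅b 0, b 1⁆} : Set Q)
    omega

end Main

/-- A plus-minus pair of a Lie algebra L: subalgebras P, M with P+M ≠ L and
U(L) = U(P)·U(M)·U(P), where U(P), U(M) denote the subalgebras of U(L) generated by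
the images of P, M. -/
def IsPlusMinusPair (F : Type*) [Field F] (L : Type*) [LieRing L] [LieAlgebra F L]
    (P M : LieSubalgebra F L) : Prop :=
  P.toSubmodule ⊔ M.toSubmodule ≠ ⊤ ∧
    Submodule.span F
      {u : UniversalEnvelopingAlgebra F L |
        ∃ p ∈ Algebra.adjoin F (ι F '' (P : Set L)),
          ∃ m ∈ Algebra.adjoin F (ι F '' (M : Set L)),
            ∃ q ∈ Algebra.adjoin F (ι F '' (P : Set L)), u = p * m * q} = ⊤

attribute [local instance] LieRing.ofAssociativeRing

/-- for a 3-dimensional Lie algebra with a plus-minus pair (P,M),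
both P and M are one-dimensional, and spanning elements of P and M generate L. -/
theorem stmt_12 (F : Type*) [Field F] [CharZero F]
    (L : Type*) [LieRing L] [LieAlgebra F L] [Module.Finite F L]
    (hdim : Module.finrank F L = 3) (P M : LieSubalgebra F L)
    (hPM : IsPlusMinusPair F L P M) :
    Module.finrank F P.toSubmodule = 1 ∧ Module.finrank F M.toSubmodule = 1 ∧
      ∀ x y : L, P.toSubmodule = Submodule.span F {x} →
        M.toSubmodule = Submodule.span F {y} →
          LieSubalgebra.lieSpan F L {x, y} = ⊤ := by

  obtain ⟨hsup, hspan⟩ := hPM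
  set K := LieSubalgebra.lieSpan F L ((P : Set L) ∪ (M : Set L)) with hKdef
  have hPK : ∀ p ∈ P, p ∈ K := fun p hp =>
    LieSubalgebra.subset_lieSpan (Set.mem_union_left _ hp)
  have hMK : ∀ m ∈ M, m ∈ K := fun m hm =>
    LieSubalgebra.subset_lieSpan (Set.mem_union_right _ hm)
  -- Main claim: K = ⊤
  have hK : K = ⊤ := by
    by_contra hKne
    set φ := UniversalEnvelopingAlgebra.lift F (LieAlgebra.ad F L) with hφdef
    have hφι : ∀ z : L, φ (ι F z) = LieAlgebra.ad F L z := fun z => lift_ι_apply F _ z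
    -- K is an ideal
    have hideal : ∀ z : L, ∀ k ∈ K, ⁅z, k⁆ ∈ K := by
      have h := push_lemma P M hspan φ (endStab K.toSubmodule)
        (fun p hp => by
          rw [hφι, mem_endStab]
          intro k hk
          exact K.lie_mem (hPK p hp) hk)
        (fun m hm => by
          rw [hφι, mem_endStab]
          intro k hk
          exact K.lie_mem (hMK m hm) hk)
      intro z k hk
      have h2 := h (ι F z)
      rw [hφι, mem_endStab] at h2
      exact h2 k hk
    set C := Submodule.span F {z : L | ∃ x y : L, ⁅x, y⁆ = z} with hCdef
    have hPD : ∀ p ∈ P, p ∈ K.toSubmodule ⊔ C := fun p hp =>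
      Submodule.mem_sup_left (hPK p hp)
    have hMD : ∀ m ∈ M, m ∈ K.toSubmodule ⊔ C := fun m hm =>
      Submodule.mem_sup_left (hMK m hm)
    have hD : K.toSubmodule ⊔ C ≠ ⊤ := by
      by_cases hKbot : K.toSubmodule = ⊥
      · -- degenerate case: P = M = 0, so L is abelian
        have habel : ∀ x y : L, ⁅x, y⁆ = 0 := by
          have hzero : ∀ (N : LieSubalgebra F L), (∀ n ∈ N, n ∈ K) →
              ∀ p ∈ N, φ (ι F p) ∈ (⊥ : Subalgebra F (Module.End F L)) := by
            intro N hN p hp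
            have hpK : p ∈ K.toSubmodule := hN p hp
            rw [hKbot] at hpK
            have hp0 : p = 0 := by simpa using hpK
            rw [hφι, hp0]
            simpa using Subalgebra.zero_mem (R := F) (⊥ : Subalgebra F (Module.End F L))
          have h := push_lemma P M hspan φ ⊥ (hzero P hPK) (hzero M hMK)
          intro x y
          have hx := h (ι F x)
          rw [hφι, Algebra.mem_bot] at hx
          obtain ⟨c, hc⟩ := hx
          have hxy : ∀ y' : L, ⁅x, y'⁆ = c • y' := by
            intro y'
            have h3 := congrArg (fun g : Module.End F L => g y') hc
            simpa [Module.algebraMap_end_apply] using h3.symm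
          by_cases hx0 : x = 0
          · rw [hx0, zero_lie]
          · have hc0 : c = 0 := by
              have h0 := hxy x
              rw [lie_self] at h0
              rcases smul_eq_zero.mp h0.symm with h4 | h4
              · exact h4
              · exact absurd h4 hx0
            rw [hxy y, hc0, zero_smul]
        have hC0 : C ≤ ⊥ := by
          rw [hCdef, Submodule.span_le]
          rintro _ ⟨x, y, rfl⟩
          simp [habel x y]
        intro hDtop
        rw [hKbot] at hDtop
        have hle : (⊤ : Submodule F L) ≤ ⊥ := by
          rw [← hDtop]
          exact sup_le le_rfl hC0
        have : Module.finrank F L = 0 := by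
          rw [← finrank_top F L, le_bot_iff.mp hle, finrank_bot]
        omega
      · -- K has dimension 1 or 2; pass to the quotient Lie algebra
        intro hDtop
        have hKsub_ne_top : K.toSubmodule ≠ ⊤ := by
          intro h
          apply hKne
          rw [← LieSubalgebra.toSubmodule_inj, LieSubalgebra.top_toSubmodule]
          exact h
        have hfrK_lt : Module.finrank F K.toSubmodule < 3 := by
          rw [← hdim]
          exact Submodule.finrank_lt hKsub_ne_top
        have hfrK_pos : Module.finrank F K.toSubmodule ≠ 0 := by
          intro h
          exact hKbot (Submodule.finrank_eq_zero.mp h)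
        set I : LieIdeal F L := { K.toSubmodule with
          lie_mem := fun {x m} hm => hideal x m hm } with hIdef
        have hq := Submodule.finrank_quotient_add_finrank I.toSubmodule
        have hIK : Module.finrank F I.toSubmodule = Module.finrank F K.toSubmodule := rfl
        rw [hdim, hIK] at hq
        haveI : Module.Finite F (L ⧸ I) :=
          Module.Finite.of_surjective I.toSubmodule.mkQ (Submodule.Quotient.mk_surjective _)
        have hqq : Module.finrank F (L ⧸ I) = Module.finrank F (L ⧸ I.toSubmodule) := rfl
        have h1 : 1 ≤ Module.finrank F (L ⧸ I) := by rw [hqq]; omega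
        have h2 : Module.finrank F (L ⧸ I) ≤ 2 := by rw [hqq]; omega
        have hCQ := small_commutator (F := F) (Q := L ⧸ I) h1 h2
        set CQ := Submodule.span F {z : L ⧸ I | ∃ x y : L ⧸ I, ⁅x, y⁆ = z} with hCQdef
        obtain ⟨z', hz'⟩ : ∃ z' : L ⧸ I, z' ∉ CQ := by
          by_contra hall
          push_neg at hall
          exact hCQ (eq_top_iff.mpr fun w _ => hall w)
        obtain ⟨z, hz⟩ := Submodule.Quotient.mk_surjective I.toSubmodule z'
        have hzD : z ∈ K.toSubmodule ⊔ C := hDtop ▸ Submodule.mem_top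
        obtain ⟨k, hk, c, hc, rfl⟩ := Submodule.mem_sup.mp hzD
        apply hz'
        rw [← hz]
        have hmkc : (Submodule.Quotient.mk c : L ⧸ I.toSubmodule) ∈ CQ := by
          have hle : C ≤ CQ.comap I.toSubmodule.mkQ := by
            rw [hCdef, Submodule.span_le]
            rintro _ ⟨x, y, rfl⟩
            refine Submodule.mem_comap.mpr (Submodule.subset_span ?_)
            exact ⟨(Submodule.Quotient.mk x : L ⧸ I.toSubmodule),
              (Submodule.Quotient.mk y : L ⧸ I.toSubmodule),
              (LieSubmodule.Quotient.mk_bracket I x y).symm⟩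
          exact hle hc
        have hmk0 : (Submodule.Quotient.mk k : L ⧸ I.toSubmodule) = 0 :=
          (Submodule.Quotient.mk_eq_zero _).mpr hk
        have : (Submodule.Quotient.mk (k + c) : L ⧸ I.toSubmodule)
            = Submodule.Quotient.mk c := by
          rw [Submodule.Quotient.mk_add, hmk0, zero_add]
        rw [this]
        exact hmkc
    -- Now use a functional vanishing on K ⊔ C to get a contradiction
    obtain ⟨x₀, hx₀⟩ : ∃ x₀ : L, x₀ ∉ K.toSubmodule ⊔ C := by
      by_contra hall
      push_neg at hall
      exact hD (eq_top_iff.mpr fun w _ => hall w)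
    obtain ⟨f, hfx0, hfmap⟩ :=
      Submodule.exists_dual_map_eq_bot_of_notMem hx₀ inferInstance
    have hf0 : ∀ d ∈ K.toSubmodule ⊔ C, f d = 0 := by
      intro d hd
      have : f d ∈ (K.toSubmodule ⊔ C).map f := ⟨d, hd, rfl⟩
      rwa [hfmap, Submodule.mem_bot] at this
    set lf : L →ₗ⁅F⁆ Polynomial F :=
      { toLinearMap := (Polynomial.monomial 1 : F →ₗ[F] Polynomial F).comp f
        map_lie' := by
          intro x y
          show (Polynomial.monomial 1) (f ⁅x, y⁆) = ⁅(Polynomial.monomial 1) (f x),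
            (Polynomial.monomial 1) (f y)⁆
          rw [Ring.lie_def, mul_comm, sub_self]
          have hbr : f ⁅x, y⁆ = 0 :=
            hf0 _ (Submodule.mem_sup_right (Submodule.subset_span ⟨x, y, rfl⟩))
          rw [hbr, map_zero] } with hlfdef
    set ψ := UniversalEnvelopingAlgebra.lift F lf with hψdef
    have hψι : ∀ z : L, ψ (ι F z) = Polynomial.monomial 1 (f z) := fun z => lift_ι_apply F _ z
    have hbotside : ∀ (N : LieSubalgebra F L), (∀ n ∈ N, n ∈ K) →
        ∀ p ∈ N, ψ (ι F p) ∈ (⊥ : Subalgebra F (Polynomial F)) := by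
      intro N hN p hp
      have : f p = 0 := hf0 p (Submodule.mem_sup_left (hN p hp))
      rw [hψι, this, map_zero]
      exact Subalgebra.zero_mem _
    have h := push_lemma P M hspan ψ ⊥ (hbotside P hPK) (hbotside M hMK)
    have hx := h (ι F x₀)
    rw [hψι, Algebra.mem_bot] at hx
    obtain ⟨c, hc⟩ := hx
    apply hfx0
    have h1 := congrArg (fun q => Polynomial.coeff q 1) hc
    have h2 : (0 : F) = f x₀ := by
      simpa [Polynomial.algebraMap_eq, Polynomial.coeff_C, Polynomial.coeff_monomial] using h1
    exact h2.symm
  -- Now derive the dimension statements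
  have hfin : FiniteDimensional F L := inferInstance
  have hsup2 : Module.finrank F ↥(P.toSubmodule ⊔ M.toSubmodule) ≤ 2 := by
    have := Submodule.finrank_lt hsup
    rw [hdim] at this
    omega
  -- neither P nor M is zero
  have hbotcase : ∀ (N N' : LieSubalgebra F L),
      ((N : Set L) ∪ (N' : Set L) = (P : Set L) ∪ (M : Set L)) →
      N.toSubmodule = ⊥ → N'.toSubmodule = ⊤ := by
    intro N N' hunion hbot
    have hsub : (P : Set L) ∪ (M : Set L) ⊆ (N' : Set L) := by
      rw [← hunion]
      rintro w (hw | hw)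
      · have hw2 : w ∈ N.toSubmodule := hw
        rw [hbot] at hw2
        have : w = 0 := by simpa using hw2
        rw [this]
        exact N'.zero_mem
      · exact hw
    have hKN : K ≤ N' := LieSubalgebra.lieSpan_le.mpr hsub
    rw [hK] at hKN
    have : N' = ⊤ := top_le_iff.mp hKN
    rw [this, LieSubalgebra.top_toSubmodule]
  have hPne : P.toSubmodule ≠ ⊥ := by
    intro hbot
    have := hbotcase P M rfl hbot
    apply hsup
    rw [this, sup_top_eq]
  have hMne : M.toSubmodule ≠ ⊥ := by
    intro hbot
    have := hbotcase M P (Set.union_comm _ _) hbot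
    apply hsup
    rw [this, top_sup_eq]
  -- P and M are not 2-dimensional
  have hdim2 : ∀ (N N' : LieSubalgebra F L),
      ((N : Set L) ∪ (N' : Set L) = (P : Set L) ∪ (M : Set L)) →
      N.toSubmodule ⊔ N'.toSubmodule = P.toSubmodule ⊔ M.toSubmodule →
      Module.finrank F N.toSubmodule ≠ 2 := by
    intro N N' hunion hsupeq h2
    have heq : N.toSubmodule = P.toSubmodule ⊔ M.toSubmodule := by
      refine Submodule.eq_of_le_of_finrank_le ?_ ?_
      · rw [← hsupeq]; exact le_sup_left
      · rw [h2]; exact hsup2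
    have hsub : (P : Set L) ∪ (M : Set L) ⊆ (N : Set L) := by
      rw [← hunion]
      rintro w (hw | hw)
      · exact hw
      · have hw2 : w ∈ N.toSubmodule := by
          rw [heq, ← hsupeq]
          exact Submodule.mem_sup_right hw
        exact hw2
    have hKN : K ≤ N := LieSubalgebra.lieSpan_le.mpr hsub
    rw [hK] at hKN
    have hNtop : N = ⊤ := top_le_iff.mp hKN
    have : Module.finrank F N.toSubmodule = 3 := by
      rw [hNtop]
      have h4 : (⊤ : LieSubalgebra F L).toSubmodule = (⊤ : Submodule F L) := by
        rw [LieSubalgebra.top_toSubmodule]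
      rw [h4, finrank_top]
      exact hdim
    omega
  have hP1 : Module.finrank F P.toSubmodule = 1 := by
    have hle : Module.finrank F P.toSubmodule ≤ 2 :=
      le_trans (Submodule.finrank_mono le_sup_left) hsup2
    have hne0 : Module.finrank F P.toSubmodule ≠ 0 := fun h =>
      hPne (Submodule.finrank_eq_zero.mp h)
    have hne2 := hdim2 P M rfl rfl
    omega
  have hM1 : Module.finrank F M.toSubmodule = 1 := by
    have hle : Module.finrank F M.toSubmodule ≤ 2 :=
      le_trans (Submodule.finrank_mono le_sup_right) hsup2
    have hne0 : Module.finrank F M.toSubmodule ≠ 0 := fun h =>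
      hMne (Submodule.finrank_eq_zero.mp h)
    have hne2 := hdim2 M P (Set.union_comm _ _) (sup_comm _ _)
    omega
  refine ⟨hP1, hM1, ?_⟩
  intro x y hx hy
  rw [eq_top_iff, ← hK]
  refine LieSubalgebra.lieSpan_le.mpr ?_
  rintro w (hw | hw)
  · have hw2 : w ∈ Submodule.span F {x} := by rw [← hx]; exact hw
    obtain ⟨a, rfl⟩ := Submodule.mem_span_singleton.mp hw2
    exact (LieSubalgebra.lieSpan F L {x, y}).smul_mem a
      (LieSubalgebra.subset_lieSpan (Set.mem_insert _ _))
  · have hw2 : w ∈ Submodule.span F {y} := by rw [← hy]; exact hw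
    obtain ⟨a, rfl⟩ := Submodule.mem_span_singleton.mp hw2
    exact (LieSubalgebra.lieSpan F L {x, y}).smul_mem a
      (LieSubalgebra.subset_lieSpan (Set.mem_insert_of_mem _ rfl))
end

section
/- For a field F of characteristic zero and a, b ∈ F, let K(a,b) be the Lie algebra with basis x, y, z and brackets [x,y]=0, [x,z]=ax, [y,z]=by. For nonzero a, a' ∈ F, K(a,1) ≅ K(a',1) if and only if a' = a or a' = a^{-1}. -/
lemma indep3 {F V : Type*} [Field F] [AddCommGroup V] [Module F V]
    (b : Module.Basis (Fin 3) F V) {c0 c1 c2 : F}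
    (h : c0 • b 0 + c1 • b 1 + c2 • b 2 = 0) : c0 = 0 ∧ c1 = 0 ∧ c2 = 0 := by
  have := Fintype.linearIndependent_iff.mp b.linearIndependent ![c0, c1, c2]
    (by simpa [Fin.sum_univ_three] using h)
  exact ⟨this 0, this 1, this 2⟩

lemma build {F K K' : Type*} [Field F] [LieRing K] [LieAlgebra F K]
    [LieRing K'] [LieAlgebra F K'] (a : F)
    (bs : Module.Basis (Fin 3) F K) (b2 : Module.Basis (Fin 3) F K')
    (h1 : ⁅bs 0, bs 1⁆ = 0) (h2 : ⁅bs 0, bs 2⁆ = a • bs 0) (h3 : ⁅bs 1, bs 2⁆ = bs 1)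
    (g1 : ⁅b2 0, b2 1⁆ = 0) (g2 : ⁅b2 0, b2 2⁆ = a • b2 0) (g3 : ⁅b2 1, b2 2⁆ = b2 1) :
    Nonempty (K ≃ₗ⁅F⁆ K') := by
  have h1' : ⁅bs 1, bs 0⁆ = 0 := by rw [← lie_skew, h1, neg_zero]
  have h2' : ⁅bs 2, bs 0⁆ = -(a • bs 0) := by rw [← lie_skew, h2]
  have h3' : ⁅bs 2, bs 1⁆ = -(bs 1) := by rw [← lie_skew, h3]
  have g1' : ⁅b2 1, b2 0⁆ = 0 := by rw [← lie_skew, g1, neg_zero]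
  have g2' : ⁅b2 2, b2 0⁆ = -(a • b2 0) := by rw [← lie_skew, g2]
  have g3' : ⁅b2 2, b2 1⁆ = -(b2 1) := by rw [← lie_skew, g3]
  let e := bs.equiv b2 (Equiv.refl _)
  have he : ∀ i, e (bs i) = b2 i := fun i => bs.equiv_apply i b2 (Equiv.refl _)
  have key : ∀ u v : K, ⁅e u, e v⁆ = e ⁅u, v⁆ := by
    intro u v
    have hu := bs.sum_repr u
    have hv := bs.sum_repr v
    rw [← hu, ← hv]
    simp only [Fin.sum_univ_three, map_add, map_smul, he, lie_add, add_lie, lie_smul,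
      smul_lie, lie_self, h1, h2, h3, h1', h2', h3', g1, g2, g3, g1', g2', g3',
      smul_zero, add_zero, zero_add, smul_neg, smul_add, map_neg, map_zero, neg_smul]
  exact ⟨{ toLinearMap := e.toLinearMap, map_lie' := fun {u v} => (key u v).symm,
           invFun := e.symm, left_inv := e.left_inv, right_inv := e.right_inv }⟩

private lemma stmt16_hard (F : Type*) [Field F] [CharZero F] (a a' : F) (ha : a ≠ 0) (ha' : a' ≠ 0)
    (K : Type*) [LieRing K] [LieAlgebra F K]
    (bs : Module.Basis (Fin 3) F K)
    (hxy : ⁅bs 0, bs 1⁆ = 0) (hxz : ⁅bs 0, bs 2⁆ = a • bs 0) (hyz : ⁅bs 1, bs 2⁆ = bs 1)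
    (K' : Type*) [LieRing K'] [LieAlgebra F K']
    (bs' : Module.Basis (Fin 3) F K')
    (hxy' : ⁅bs' 0, bs' 1⁆ = 0) (hxz' : ⁅bs' 0, bs' 2⁆ = a' • bs' 0) (hyz' : ⁅bs' 1, bs' 2⁆ = bs' 1)
    (φ : K ≃ₗ⁅F⁆ K') : (a' = a ∨ a' = a⁻¹) := by
  have φsmul : ∀ (c : F) (k : K), φ (c • k) = c • φ k := fun c k => φ.toLieHom.map_smul c k
  have φadd : ∀ (k l : K), φ (k + l) = φ k + φ l := fun k l => φ.toLieHom.map_add k l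
  have φsub : ∀ (k l : K), φ (k - l) = φ k - φ l := fun k l => φ.toLieHom.map_sub k l
  set p := bs'.repr (φ (bs 0)) 0 with hp
  set q := bs'.repr (φ (bs 0)) 1 with hq
  set r := bs'.repr (φ (bs 0)) 2 with hr
  set s := bs'.repr (φ (bs 1)) 0 with hs
  set t := bs'.repr (φ (bs 1)) 1 with ht
  set u := bs'.repr (φ (bs 1)) 2 with hu
  set v := bs'.repr (φ (bs 2)) 0 with hv
  set w := bs'.repr (φ (bs 2)) 1 with hw
  set γ := bs'.repr (φ (bs 2)) 2 with hγ
  have hpx : φ (bs 0) = p • bs' 0 + q • bs' 1 + r • bs' 2 := by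
    rw [hp, hq, hr]
    have h := bs'.sum_repr (φ (bs 0))
    rw [Fin.sum_univ_three] at h
    exact h.symm
  have hpy : φ (bs 1) = s • bs' 0 + t • bs' 1 + u • bs' 2 := by
    rw [hs, ht, hu]
    have h := bs'.sum_repr (φ (bs 1))
    rw [Fin.sum_univ_three] at h
    exact h.symm
  have hpz : φ (bs 2) = v • bs' 0 + w • bs' 1 + γ • bs' 2 := by
    rw [hv, hw, hγ]
    have h := bs'.sum_repr (φ (bs 2))
    rw [Fin.sum_univ_three] at h
    exact h.symm
  have skew1 : ⁅bs' 1, bs' 0⁆ = 0 := by rw [← lie_skew, hxy', neg_zero]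
  have skew2 : ⁅bs' 2, bs' 0⁆ = -(a' • bs' 0) := by rw [← lie_skew, hxz']
  have skew3 : ⁅bs' 2, bs' 1⁆ = -(bs' 1) := by rw [← lie_skew, hyz']
  have E1 : ⁅φ (bs 0), φ (bs 2)⁆ = a • φ (bs 0) := by
    rw [← LieEquiv.map_lie, hxz]; exact φ.toLieHom.map_smul a (bs 0)
  have E2 : ⁅φ (bs 1), φ (bs 2)⁆ = φ (bs 1) := by
    rw [← LieEquiv.map_lie, hyz]
  rw [hpx, hpz] at E1
  rw [hpy, hpz] at E2
  simp only [lie_add, add_lie, lie_smul, smul_lie, lie_self, hxy', hxz', hyz',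
    skew1, skew2, skew3, smul_zero, add_zero, zero_add, smul_neg, smul_smul,
    smul_add, neg_smul] at E1 E2
  have D1 := indep3 bs' (c0 := a' * (p * γ) - a' * (r * v) - a * p)
    (c1 := q * γ - r * w - a * q) (c2 := -(a * r))
    (by linear_combination (norm := module) E1)
  have D2 := indep3 bs' (c0 := a' * (s * γ) - a' * (u * v) - s)
    (c1 := t * γ - u * w - t) (c2 := -u)
    (by linear_combination (norm := module) E2)
  have hr0 : r = 0 := by
    rcases mul_eq_zero.mp (neg_eq_zero.mp D1.2.2) with h | h
    · exact absurd h ha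
    · exact h
  have hu0 : u = 0 := neg_eq_zero.mp D2.2.2
  rw [hr0] at D1 hpx
  rw [hu0] at D2 hpy
  -- γ ≠ 0 via surjectivity
  set m := φ.symm (bs' 2) with hm
  have hmeq : φ m = bs' 2 := φ.apply_symm_apply (bs' 2)
  have hmrep : m = bs.repr m 0 • bs 0 + bs.repr m 1 • bs 1 + bs.repr m 2 • bs 2 := by
    have h := bs.sum_repr m
    rw [Fin.sum_univ_three] at h
    exact h.symm
  rw [hmrep] at hmeq
  rw [φadd, φadd, φsmul, φsmul, φsmul] at hmeq
  rw [hpx, hpy, hpz] at hmeq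
  have D3 := indep3 bs' (c0 := bs.repr m 0 * p + bs.repr m 1 * s + bs.repr m 2 * v)
    (c1 := bs.repr m 0 * q + bs.repr m 1 * t + bs.repr m 2 * w)
    (c2 := bs.repr m 2 * γ - 1)
    (by linear_combination (norm := module) hmeq)
  have hγne : γ ≠ 0 := by
    intro h0
    rw [h0, mul_zero] at D3
    simpa using D3.2.2
  have hdet : p * t - q * s ≠ 0 := by
    intro hzero
    have hz1 : φ (t • bs 0 - q • bs 1) = 0 := by
      rw [φsub, φsmul, φsmul, hpx, hpy]
      linear_combination (norm := module) hzero • bs' 0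
    have hz2 : φ (s • bs 0 - p • bs 1) = 0 := by
      rw [φsub, φsmul, φsmul, hpx, hpy]
      linear_combination (norm := module) (-hzero) • bs' 1
    have φzero : φ (0 : K) = (0 : K') := φ.toLieHom.map_zero
    have h6 : t • bs 0 - q • bs 1 = 0 :=
      φ.injective (hz1.trans φzero.symm)
    have h7 : s • bs 0 - p • bs 1 = 0 :=
      φ.injective (hz2.trans φzero.symm)
    have I1 := indep3 bs (c0 := t) (c1 := -q) (c2 := 0)
      (by linear_combination (norm := module) h6)
    have I2 := indep3 bs (c0 := s) (c1 := -p) (c2 := 0)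
      (by linear_combination (norm := module) h7)
    have hq0 : q = 0 := neg_eq_zero.mp I1.2.1
    have hp0 : p = 0 := neg_eq_zero.mp I2.2.1
    have hx0 : φ (bs 0) = 0 := by
      rw [hpx, hp0, hq0]
      simp
    have : bs 0 = (0 : K) := φ.injective (hx0.trans φzero.symm)
    exact bs.ne_zero 0 this
  have hcase : p * t ≠ 0 ∨ q * s ≠ 0 := by
    by_contra hc
    push_neg at hc
    exact hdet (by rw [hc.1, hc.2, sub_zero])
  rcases hcase with hpt | hqs
  · left
    have hp0 : p ≠ 0 := left_ne_zero_of_mul hpt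
    have ht0 : t ≠ 0 := right_ne_zero_of_mul hpt
    have h2 : p * (a' * γ - a) = 0 := by linear_combination D1.1
    have h3 : t * (γ - 1) = 0 := by linear_combination D2.2.1
    have hag : a' * γ = a := by
      rcases mul_eq_zero.mp h2 with h | h
      · exact absurd h hp0
      · linear_combination h
    have hg1 : γ = 1 := by
      rcases mul_eq_zero.mp h3 with h | h
      · exact absurd h ht0
      · linear_combination h
    rw [hg1, mul_one] at hag
    exact hag
  · right
    have hq0 : q ≠ 0 := left_ne_zero_of_mul hqs
    have hs0 : s ≠ 0 := right_ne_zero_of_mul hqs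
    have h2 : q * (γ - a) = 0 := by linear_combination D1.2.1
    have h3 : s * (a' * γ - 1) = 0 := by linear_combination D2.1
    have hga : γ = a := by
      rcases mul_eq_zero.mp h2 with h | h
      · exact absurd h hq0
      · linear_combination h
    have hag : a' * a = 1 := by
      rcases mul_eq_zero.mp h3 with h | h
      · exact absurd h hs0
      · rw [hga] at h; linear_combination h
    exact eq_inv_of_mul_eq_one_left hag


/-- for nonzero a, a' ∈ F, K(a,1) ≅ K(a',1) iff a' = a or a' = a⁻¹,
where K(a,b) has basis x,y,z with [x,y]=0, [x,z]=ax, [y,z]=by. -/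
theorem stmt_16 (F : Type*) [Field F] [CharZero F] (a a' : F) (ha : a ≠ 0) (ha' : a' ≠ 0)
    (K : Type*) [LieRing K] [LieAlgebra F K] (x y z : K)
    (hbasis : ∃ bs : Module.Basis (Fin 3) F K, bs 0 = x ∧ bs 1 = y ∧ bs 2 = z)
    (hxy : ⁅x, y⁆ = 0) (hxz : ⁅x, z⁆ = a • x) (hyz : ⁅y, z⁆ = y)
    (K' : Type*) [LieRing K'] [LieAlgebra F K'] (x' y' z' : K')
    (hbasis' : ∃ bs : Module.Basis (Fin 3) F K', bs 0 = x' ∧ bs 1 = y' ∧ bs 2 = z')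
    (hxy' : ⁅x', y'⁆ = 0) (hxz' : ⁅x', z'⁆ = a' • x') (hyz' : ⁅y', z'⁆ = y') :
    Nonempty (K ≃ₗ⁅F⁆ K') ↔ (a' = a ∨ a' = a⁻¹) := by
  obtain ⟨bs, hb0, hb1, hb2⟩ := hbasis
  obtain ⟨bs', hb0', hb1', hb2'⟩ := hbasis'
  subst hb0 hb1 hb2 hb0' hb1' hb2'
  constructor
  · rintro ⟨φ⟩
    exact stmt16_hard F a a' ha ha' K bs hxy hxz hyz K' bs' hxy' hxz' hyz' φ
  · rintro (rfl | rfl)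
    · exact build a' bs bs' hxy hxz hyz hxy' hxz' hyz'
    · -- a' = a⁻¹ : use the basis y', x', a • z' of K'
      have ha'' : a⁻¹ ≠ 0 := inv_ne_zero ha
      set wts : Fin 3 → Fˣ := ![1, 1, Units.mk0 a ha] with hwts
      set b2 : Module.Basis (Fin 3) F K' := (bs'.unitsSMul wts).reindex (Equiv.swap 0 1) with hb2
      have e0 : b2 0 = bs' 1 := by
        rw [hb2, Module.Basis.reindex_apply, Module.Basis.unitsSMul_apply]
        simp [hwts, Equiv.swap_apply_left]
      have e1 : b2 1 = bs' 0 := by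
        rw [hb2, Module.Basis.reindex_apply, Module.Basis.unitsSMul_apply]
        simp [hwts, Equiv.swap_apply_right]
      have hsw : (Equiv.swap (0 : Fin 3) 1) 2 = 2 := by decide
      have e2 : b2 2 = a • bs' 2 := by
        rw [hb2, Module.Basis.reindex_apply, Module.Basis.unitsSMul_apply, Equiv.symm_swap, hsw]
        simp [hwts, Units.smul_def]
      refine build a bs b2 hxy hxz hyz ?_ ?_ ?_
      · rw [e0, e1, ← lie_skew, hxy', neg_zero]
      · rw [e0, e2, lie_smul, hyz']
      · rw [e1, e2, lie_smul, hxz', smul_smul, mul_inv_cancel₀ ha, one_smul]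
end

section
/- For an algebraically closed field F of characteristic zero and r, s ∈ F, the Lie algebras 𝔄(r) and 𝔄(s) are isomorphic if and only if r = s; moreover 𝔄(r) is never isomorphic to 𝔄(∞). -/
set_option maxHeartbeats 2000000 in

lemma stmt17_key (F : Type*) [Field F] (ρ ε s e : F)
    (L : Type*) [LieRing L] [LieAlgebra F L] (a x y : L)
    (B : Module.Basis (Fin 3) F L) (hB0 : B 0 = a) (hB1 : B 1 = x) (hB2 : B 2 = y)
    (h2 : ⁅a, x⁆ = y) (h3 : ⁅a, y⁆ = ρ • x + ε • y)
    (M : Type*) [LieRing M] [LieAlgebra F M] (a' x' y' : M)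
    (C : Module.Basis (Fin 3) F M) (hC0 : C 0 = a') (hC1 : C 1 = x') (hC2 : C 2 = y')
    (h1' : ⁅x', y'⁆ = 0) (h2' : ⁅a', x'⁆ = y') (h3' : ⁅a', y'⁆ = s • x' + e • y')
    (φ : L ≃ₗ⁅F⁆ M) (hρ : ρ ≠ 0) :
    ∃ p : F, p ≠ 0 ∧ e * p = ε ∧ s * p ^ 2 = ρ := by
  subst hB0 hB1 hB2 hC0 hC1 hC2
  have h1'' : ⁅(C 2 : M), C 1⁆ = 0 := by rw [← lie_skew, h1', neg_zero]
  have h2'' : ⁅(C 1 : M), C 0⁆ = -C 2 := by rw [← lie_skew, h2']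
  have h3'' : ⁅(C 2 : M), C 0⁆ = -(s • C 1 + e • C 2) := by rw [← lie_skew, h3']
  have expand : ∀ z : M, z = C.repr z 0 • C 0 + C.repr z 1 • C 1 + C.repr z 2 • C 2 := by
    intro z
    conv_lhs => rw [← C.sum_repr z]
    rw [Fin.sum_univ_three]
  have expandL : ∀ z : L, z = B.repr z 0 • B 0 + B.repr z 1 • B 1 + B.repr z 2 • B 2 := by
    intro z
    conv_lhs => rw [← B.sum_repr z]
    rw [Fin.sum_univ_three]
  have map3 : ∀ (c1 c2 c3 : F) (z1 z2 z3 : L),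
      φ (c1 • z1 + c2 • z2 + c3 • z3) = c1 • φ z1 + c2 • φ z2 + c3 • φ z3 := by
    intro c1 c2 c3 z1 z2 z3
    show φ.toLieHom _ = _
    rw [map_add, map_add, map_smul, map_smul, map_smul]
    rfl
  set p := C.repr (φ (B 0)) 0 with hp
  set q := C.repr (φ (B 0)) 1 with hq
  set t := C.repr (φ (B 0)) 2 with ht
  set u := C.repr (φ (B 1)) 0 with hu
  set v := C.repr (φ (B 1)) 1 with hv
  set w := C.repr (φ (B 1)) 2 with hw
  set k := C.repr (φ (B 2)) 0 with hk
  set l := C.repr (φ (B 2)) 1 with hl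
  set m := C.repr (φ (B 2)) 2 with hm
  have Ea : φ (B 0) = p • C 0 + q • C 1 + t • C 2 := expand _
  have Ex : φ (B 1) = u • C 0 + v • C 1 + w • C 2 := expand _
  have Ey : φ (B 2) = k • C 0 + l • C 1 + m • C 2 := expand _
  have E1 : φ (B 2) = ⁅φ (B 0), φ (B 1)⁆ := by rw [← LieEquiv.map_lie, h2]
  have E3 : ρ • φ (B 1) + ε • φ (B 2) = ⁅φ (B 0), φ (B 2)⁆ := by
    rw [← LieEquiv.map_lie, h3]
    have h' : (ρ • B 1 + ε • B 2 : L) = ρ • B 1 + ε • B 2 + (0:F) • B 2 := by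
      rw [zero_smul, add_zero]
    rw [h', map3, zero_smul, add_zero]
  rw [Ea, Ex, Ey] at E1 E3
  simp only [lie_add, add_lie, lie_smul, smul_lie, lie_self, smul_zero, zero_add, add_zero,
    h1', h2', h3', h1'', h2'', h3''] at E1 E3
  have e10 := congrArg (fun z => C.repr z 0) E1
  have e11 := congrArg (fun z => C.repr z 1) E1
  have e12 := congrArg (fun z => C.repr z 2) E1
  have e30 := congrArg (fun z => C.repr z 0) E3
  have e31 := congrArg (fun z => C.repr z 1) E3
  have e32 := congrArg (fun z => C.repr z 2) E3
  simp at e10 e11 e12 e30 e31 e32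
  have hk0 : k = 0 := e10
  have hu0 : u = 0 := by
    have h : ρ * u = 0 := by linear_combination e30 - ε * hk0
    exact (mul_eq_zero.mp h).resolve_left hρ
  have E11 : l = w * (p * s) := by linear_combination e11 - (t * s) * hu0
  have E12 : m = v * p + w * (p * e) := by linear_combination e12 - (q + t * e) * hu0
  have E31 : ρ * v + ε * l = m * (p * s) := by linear_combination e31 - (t * s) * hk0
  have E32 : ρ * w + ε * m = l * p + m * (p * e) := by linear_combination e32 - (q + t * e) * hk0
  -- p ≠ 0
  have hpne : p ≠ 0 := by
    obtain ⟨z, hz⟩ := φ.surjective (C 0)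
    have hzexp : C 0 = B.repr z 0 • φ (B 0) + B.repr z 1 • φ (B 1) + B.repr z 2 • φ (B 2) := by
      rw [← map3, ← expandL z]; exact hz.symm
    have h := congrArg (fun zz => C.repr zz 0) hzexp
    rw [Ea, Ex, Ey] at h
    simp at h
    rw [hu0, hk0, mul_zero, mul_zero, add_zero, add_zero] at h
    intro hzero
    rw [hzero, mul_zero] at h
    exact one_ne_zero h
  -- v*m - w*l ≠ 0
  have hD : v * m - w * l ≠ 0 := by
    intro hD0
    have mz : φ (0 : L) = 0 := φ.toLieHom.map_zero
    have lin2 : ∀ c1 c2 : F, φ (c1 • B 1 - c2 • B 2) = c1 • φ (B 1) - c2 • φ (B 2) := by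
      intro c1 c2
      have h' : (c1 • B 1 - c2 • B 2 : L) = (0:F) • B 0 + c1 • B 1 + (-c2) • B 2 := by
        rw [zero_smul, zero_add, neg_smul, ← sub_eq_add_neg]
      rw [h', map3, zero_smul, zero_add, neg_smul, ← sub_eq_add_neg]
    have hz1 : m • B 1 - w • B 2 = 0 := by
      apply φ.injective
      show φ _ = φ 0
      rw [lin2, Ex, Ey, mz, hu0, hk0]
      simp only [zero_smul, zero_add, smul_add, smul_smul]
      rw [show m * v = w * l by linear_combination hD0]
      module
    have hm0 : m = 0 := by
      have h := congrArg (fun zz => B.repr zz 1) hz1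
      simpa using h
    have hw0 : w = 0 := by
      have h := congrArg (fun zz => B.repr zz 2) hz1
      simpa using h
    have hz2 : l • B 1 - v • B 2 = 0 := by
      apply φ.injective
      show φ _ = φ 0
      rw [lin2, Ex, Ey, mz, hu0, hk0]
      simp only [zero_smul, zero_add, smul_add, smul_smul]
      rw [show l * v = v * l by ring, show l * w = v * m by linear_combination -hD0]
      module
    have hl0 : l = 0 := by
      have h := congrArg (fun zz => B.repr zz 1) hz2
      simpa using h
    have hv0 : v = 0 := by
      have h := congrArg (fun zz => B.repr zz 2) hz2
      simpa using h
    have hx0 : φ (B 1) = 0 := by rw [Ex, hu0, hv0, hw0]; simp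
    have : (B 1 : L) = 0 := by
      apply φ.injective
      show φ _ = φ 0
      rw [hx0, mz]
    exact B.ne_zero 1 this
  have hQ : v * m - w * l = p * (v * v + e * v * w - s * w * w) := by
    linear_combination v * E12 - w * E11
  have hQne : v * v + e * v * w - s * w * w ≠ 0 := by
    intro h
    exact hD (by rw [hQ, h, mul_zero])
  rw [E11, E12] at E31 E32
  have hep : e * p = ε := by
    have key : (e * p - ε) * (p * (v * v + e * v * w - s * w * w)) = 0 := by
      linear_combination w * E31 - v * E32
    rcases mul_eq_zero.mp key with h | h
    · linear_combination h
    · exact absurd h (by simp [hpne, hQne, mul_eq_zero])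
  refine ⟨p, hpne, hep, ?_⟩
  rcases eq_or_ne v 0 with hv0 | hv0
  · have hw0 : w ≠ 0 := fun hw0 => hQne (by rw [hv0, hw0]; ring)
    have h : ρ * w = s * p ^ 2 * w := by
      linear_combination E32 + (v * p + w * p * e) * hep
    exact (mul_right_cancel₀ hw0 h).symm
  · have h : ρ * v = s * p ^ 2 * v := by
      linear_combination E31 + (w * p * s) * hep
    exact (mul_right_cancel₀ hv0 h).symm


set_option maxHeartbeats 2000000 in
lemma stmt17_iso (F : Type*) [Field F] (r e : F)
    (L : Type*) [LieRing L] [LieAlgebra F L] (a x y : L)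
    (B : Module.Basis (Fin 3) F L) (hB0 : B 0 = a) (hB1 : B 1 = x) (hB2 : B 2 = y)
    (h1 : ⁅x, y⁆ = 0) (h2 : ⁅a, x⁆ = y) (h3 : ⁅a, y⁆ = r • x + e • y)
    (M : Type*) [LieRing M] [LieAlgebra F M] (a' x' y' : M)
    (C : Module.Basis (Fin 3) F M) (hC0 : C 0 = a') (hC1 : C 1 = x') (hC2 : C 2 = y')
    (h1' : ⁅x', y'⁆ = 0) (h2' : ⁅a', x'⁆ = y') (h3' : ⁅a', y'⁆ = r • x' + e • y') :
    Nonempty (L ≃ₗ⁅F⁆ M) := by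
  subst hB0 hB1 hB2 hC0 hC1 hC2
  have h1'' : ⁅(B 1 : L), B 0⁆ = -B 2 := by rw [← lie_skew, h2]
  have h2'' : ⁅(B 2 : L), B 0⁆ = -(r • B 1 + e • B 2) := by rw [← lie_skew, h3]
  have h3'' : ⁅(B 2 : L), B 1⁆ = 0 := by rw [← lie_skew, h1, neg_zero]
  have g1'' : ⁅(C 1 : M), C 0⁆ = -C 2 := by rw [← lie_skew, h2']
  have g2'' : ⁅(C 2 : M), C 0⁆ = -(r • C 1 + e • C 2) := by rw [← lie_skew, h3']
  have g3'' : ⁅(C 2 : M), C 1⁆ = 0 := by rw [← lie_skew, h1', neg_zero]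
  set f := B.equiv C (Equiv.refl _) with hf
  have hfB : ∀ i, f (B i) = C i := by
    intro i
    rw [hf, B.equiv_apply, Equiv.refl_apply]
  have expandL : ∀ z : L, z = B.repr z 0 • B 0 + B.repr z 1 • B 1 + B.repr z 2 • B 2 := by
    intro z
    conv_lhs => rw [← B.sum_repr z]
    rw [Fin.sum_univ_three]
  have hcomm : ∀ z w : L, f ⁅z, w⁆ = ⁅f z, f w⁆ := by
    intro z w
    rw [expandL z, expandL w]
    simp only [lie_add, add_lie, lie_smul, smul_lie, lie_self, smul_zero, add_zero, zero_add,
      map_add, map_smul, map_neg, map_zero, h1, h2, h3, h1'', h2'', h3'', hfB,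
      h1', h2', h3', g1'', g2'', g3'', smul_add, smul_neg, smul_smul]
  exact ⟨{ f with map_lie' := by intro z w; exact hcomm z w }⟩

/-- over an algebraically closed field F of characteristic 0,
𝔄(r) ≅ 𝔄(s) iff r = s, and 𝔄(r) ≇ 𝔄(∞).  Here 𝔄(r) is the 3-dimensional Lie
algebra with basis a, x, y and brackets [x,y]=0, [a,x]=y, [a,y]=r•x+y (the
bracket relations of the matrices A(r), X=E₁₃, Y=E₂₃), and 𝔄(∞) has brackets
[x,y]=0, [a,x]=y, [a,y]=x. -/
theorem stmt_17 (F : Type*) [Field F] [CharZero F] [IsAlgClosed F] (r s : F)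
    (Lr : Type*) [LieRing Lr] [LieAlgebra F Lr] (ar xr yr : Lr)
    (hbr : ∃ bs : Module.Basis (Fin 3) F Lr, bs 0 = ar ∧ bs 1 = xr ∧ bs 2 = yr)
    (h1r : ⁅xr, yr⁆ = 0) (h2r : ⁅ar, xr⁆ = yr) (h3r : ⁅ar, yr⁆ = r • xr + yr)
    (Ls : Type*) [LieRing Ls] [LieAlgebra F Ls] (as xs ys : Ls)
    (hbs : ∃ bs : Module.Basis (Fin 3) F Ls, bs 0 = as ∧ bs 1 = xs ∧ bs 2 = ys)
    (h1s : ⁅xs, ys⁆ = 0) (h2s : ⁅as, xs⁆ = ys) (h3s : ⁅as, ys⁆ = s • xs + ys)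
    (Li : Type*) [LieRing Li] [LieAlgebra F Li] (ai xi yi : Li)
    (hbi : ∃ bs : Module.Basis (Fin 3) F Li, bs 0 = ai ∧ bs 1 = xi ∧ bs 2 = yi)
    (h1i : ⁅xi, yi⁆ = 0) (h2i : ⁅ai, xi⁆ = yi) (h3i : ⁅ai, yi⁆ = xi) :
    (Nonempty (Lr ≃ₗ⁅F⁆ Ls) ↔ r = s) ∧ ¬ Nonempty (Lr ≃ₗ⁅F⁆ Li) := by
  obtain ⟨B, hB0, hB1, hB2⟩ := hbr
  obtain ⟨C, hC0, hC1, hC2⟩ := hbs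
  obtain ⟨D, hD0, hD1, hD2⟩ := hbi
  have h3r' : ⁅ar, yr⁆ = r • xr + (1:F) • yr := by rw [one_smul]; exact h3r
  have h3s' : ⁅as, ys⁆ = s • xs + (1:F) • ys := by rw [one_smul]; exact h3s
  have h3i' : ⁅ai, yi⁆ = (1:F) • xi + (0:F) • yi := by rw [one_smul, zero_smul, add_zero]; exact h3i
  constructor
  · constructor
    · rintro ⟨φ⟩
      by_cases hr : r = 0
      · by_cases hs : s = 0
        · rw [hr, hs]
        · obtain ⟨p, hp0, hep, hsp⟩ := stmt17_key F s 1 r 1 Ls as xs ys C hC0 hC1 hC2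
            h2s h3s' Lr ar xr yr B hB0 hB1 hB2 h1r h2r h3r' φ.symm hs
          rw [one_mul] at hep
          rw [hep, one_pow, mul_one, hr] at hsp
          exact absurd hsp.symm hs
      · obtain ⟨p, hp0, hep, hsp⟩ := stmt17_key F r 1 s 1 Lr ar xr yr B hB0 hB1 hB2
          h2r h3r' Ls as xs ys C hC0 hC1 hC2 h1s h2s h3s' φ hr
        rw [one_mul] at hep
        rw [hep, one_pow, mul_one] at hsp
        exact hsp.symm
    · rintro rfl
      exact stmt17_iso F r 1 Lr ar xr yr B hB0 hB1 hB2 h1r h2r h3r' Ls as xs ys C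
        hC0 hC1 hC2 h1s h2s h3s'
  · rintro ⟨φ⟩
    obtain ⟨p, hp0, hep, hsp⟩ := stmt17_key F 1 0 r 1 Li ai xi yi D hD0 hD1 hD2
      h2i h3i' Lr ar xr yr B hB0 hB1 hB2 h1r h2r h3r' φ.symm one_ne_zero
    rw [one_mul] at hep
    exact hp0 hep
end

section
/- Let L = L₁ ⊕ L₀ ⊕ L₋₁ be a three-graded Lie algebra over a field F of characteristic zero with each graded piece one-dimensional, say L₁ = Fx, L₋₁ = Fy, L₀ = Fz with z = [x,y] whenever [x,y] ≠ 0. If the pair (L₁, L₋₁) is a plus-minus pair for L, then L is isomorphic to sl₂(F) or to the 3-dimensional Heisenberg Lie algebra. -/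
open UniversalEnvelopingAlgebra

private lemma bracket_ext {F L M : Type*} [Field F] [LieRing L] [LieAlgebra F L]
    [LieRing M] [LieAlgebra F M] {ι : Type*} (bs : Module.Basis ι F L) (T : L →ₗ[F] M)
    (h : ∀ i j, T ⁅bs i, bs j⁆ = ⁅T (bs i), T (bs j)⁆) (u v : L) :
    T ⁅u, v⁆ = ⁅T u, T v⁆ := by
  let D1 : L →ₗ[F] L →ₗ[F] M := LinearMap.mk₂ F (fun u v => T ⁅u, v⁆)
    (by intros; simp [add_lie]) (by intros; simp [smul_lie])
    (by intros; simp [lie_add]) (by intros; simp [lie_smul])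
  let D2 : L →ₗ[F] L →ₗ[F] M := LinearMap.mk₂ F (fun u v => ⁅T u, T v⁆)
    (by intros; simp [add_lie]) (by intros; simp [smul_lie])
    (by intros; simp [lie_add]) (by intros; simp [lie_smul])
  have hD : D1 = D2 := bs.ext fun i => bs.ext fun j => h i j
  have := LinearMap.congr_fun (LinearMap.congr_fun hD u) v
  simpa [D1, D2] using this

section

attribute [local instance] LieRing.ofAssociativeRing

private lemma no_pm {F : Type*} [Field F] {L : Type*} [LieRing L] [LieAlgebra F L]
    {x y z : L} (bs : Module.Basis (Fin 3) F L) (hb0 : bs 0 = x) (hb1 : bs 1 = y) (hb2 : bs 2 = z)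
    {a b : F} (ha : a • x = ⁅x, z⁆) (hb : b • y = ⁅y, z⁆) (hxy0 : ⁅x, y⁆ = 0)
    (hpm : IsPlusMinusPair F L (LieSubalgebra.lieSpan F L {x})
        (LieSubalgebra.lieSpan F L {y})) : False := by
  classical
  set θ : L →ₗ[F] Polynomial F := (bs.coord 2).smulRight Polynomial.X with hθ
  have θx : θ x = 0 := by
    simp [hθ, ← hb0, Module.Basis.coord_apply, Module.Basis.repr_self, Finsupp.single_apply]
  have θy : θ y = 0 := by
    simp [hθ, ← hb1, Module.Basis.coord_apply, Module.Basis.repr_self, Finsupp.single_apply]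
  have θz : θ z = Polynomial.X := by
    simp [hθ, ← hb2, Module.Basis.coord_apply, Module.Basis.repr_self]
  have θbr : ∀ u v : L, θ ⁅u, v⁆ = ⁅θ u, θ v⁆ := by
    refine bracket_ext bs θ fun i j => ?_
    rw [(Commute.all (θ (bs i)) (θ (bs j))).lie_eq]
    fin_cases i <;> fin_cases j <;>
      simp only [show (⟨0, by omega⟩ : Fin 3) = 0 from rfl, show (⟨1, by omega⟩ : Fin 3) = 1 from rfl,
        show (⟨2, by omega⟩ : Fin 3) = 2 from rfl, Fin.isValue, hb0, hb1, hb2, lie_self, hxy0, ← ha, ← hb, map_zero,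
        ← lie_skew y x, ← lie_skew z x, ← lie_skew z y, map_neg, map_smul, θx, θy,
        smul_zero, neg_zero]
  let θhom : L →ₗ⁅F⁆ Polynomial F := { θ with map_lie' := θbr _ _ }
  let Φ : UniversalEnvelopingAlgebra F L →ₐ[F] Polynomial F :=
    UniversalEnvelopingAlgebra.lift F θhom
  have Φι : ∀ v : L, Φ (ι F v) = θ v := fun v => UniversalEnvelopingAlgebra.lift_ι_apply F θhom v
  let K : LieSubalgebra F L :=
    { LinearMap.ker θ with
      lie_mem' := fun {u v} _ _ => by
        show ⁅u, v⁆ ∈ LinearMap.ker θ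
        rw [LinearMap.mem_ker, θbr, (Commute.all _ _).lie_eq] }
  have hKmem : ∀ v : L, v ∈ K ↔ θ v = 0 := fun v => LinearMap.mem_ker
  have hPK : LieSubalgebra.lieSpan F L {x} ≤ K :=
    LieSubalgebra.lieSpan_le.mpr (Set.singleton_subset_iff.mpr ((hKmem x).mpr θx))
  have hMK : LieSubalgebra.lieSpan F L {y} ≤ K :=
    LieSubalgebra.lieSpan_le.mpr (Set.singleton_subset_iff.mpr ((hKmem y).mpr θy))
  have key : ∀ (S' : LieSubalgebra F L), S' ≤ K →
      ∀ u ∈ Algebra.adjoin F (ι F '' (S' : Set L)), ∃ c : F, Φ u = Polynomial.C c := by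
    intro S' hS' u hu
    have h1 : Φ u ∈ Subalgebra.map Φ (Algebra.adjoin F (ι F '' (S' : Set L))) :=
      Subalgebra.mem_map.mpr ⟨u, hu, rfl⟩
    rw [AlgHom.map_adjoin] at h1
    have h2 : (⇑Φ '' (⇑(ι F) '' (S' : Set L))) ⊆ ((⊥ : Subalgebra F (Polynomial F)) : Set _) := by
      rintro w ⟨_, ⟨v, hv, rfl⟩, rfl⟩
      have hv0 : θ v = 0 := (hKmem v).mp (hS' hv)
      rw [Φι, hv0]
      exact zero_mem ⊥
    have h3 := Algebra.adjoin_le h2 h1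
    rw [Algebra.mem_bot] at h3
    obtain ⟨c, hc⟩ := h3
    exact ⟨c, by rw [← hc, Polynomial.algebraMap_eq]⟩
  have hXtop : (ι F z : UniversalEnvelopingAlgebra F L) ∈ Submodule.span F
      {u : UniversalEnvelopingAlgebra F L |
        ∃ p ∈ Algebra.adjoin F (ι F '' ((LieSubalgebra.lieSpan F L {x}) : Set L)),
          ∃ m ∈ Algebra.adjoin F (ι F '' ((LieSubalgebra.lieSpan F L {y}) : Set L)),
            ∃ q ∈ Algebra.adjoin F (ι F '' ((LieSubalgebra.lieSpan F L {x}) : Set L)),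
              u = p * m * q} := by
    rw [hpm.2]; trivial
  have hXimg : Polynomial.X ∈ Submodule.map Φ.toLinearMap (Submodule.span F
      {u : UniversalEnvelopingAlgebra F L |
        ∃ p ∈ Algebra.adjoin F (ι F '' ((LieSubalgebra.lieSpan F L {x}) : Set L)),
          ∃ m ∈ Algebra.adjoin F (ι F '' ((LieSubalgebra.lieSpan F L {y}) : Set L)),
            ∃ q ∈ Algebra.adjoin F (ι F '' ((LieSubalgebra.lieSpan F L {x}) : Set L)),
              u = p * m * q}) :=
    ⟨ι F z, hXtop, by rw [AlgHom.toLinearMap_apply, Φι, θz]⟩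
  rw [Submodule.map_span] at hXimg
  have hsub : (⇑Φ.toLinearMap '' {u : UniversalEnvelopingAlgebra F L |
      ∃ p ∈ Algebra.adjoin F (ι F '' ((LieSubalgebra.lieSpan F L {x}) : Set L)),
        ∃ m ∈ Algebra.adjoin F (ι F '' ((LieSubalgebra.lieSpan F L {y}) : Set L)),
          ∃ q ∈ Algebra.adjoin F (ι F '' ((LieSubalgebra.lieSpan F L {x}) : Set L)),
            u = p * m * q}) ⊆
      ((Subalgebra.toSubmodule (⊥ : Subalgebra F (Polynomial F))) : Set (Polynomial F)) := by
    rintro w ⟨u, ⟨p, hp, m, hm, q, hq, rfl⟩, rfl⟩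
    obtain ⟨cp, hcp⟩ := key _ hPK p hp
    obtain ⟨cm, hcm⟩ := key _ hMK m hm
    obtain ⟨cq, hcq⟩ := key _ hPK q hq
    show Φ (p * m * q) ∈ (⊥ : Subalgebra F (Polynomial F))
    rw [map_mul, map_mul, hcp, hcm, hcq, Algebra.mem_bot]
    exact ⟨cp * cm * cq, by rw [Polynomial.algebraMap_eq, map_mul, map_mul]⟩
  have hXbot := Submodule.span_le.mpr hsub hXimg
  rw [Subalgebra.mem_toSubmodule, Algebra.mem_bot] at hXbot
  obtain ⟨c, hc⟩ := hXbot
  exact Polynomial.X_ne_C c (by rw [← hc, Polynomial.algebraMap_eq])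

end

private lemma iso_heis {F : Type*} [Field F] {L : Type*} [LieRing L] [LieAlgebra F L]
    {H : Type*} [LieRing H] [LieAlgebra F H]
    {x y z : L} (bs : Module.Basis (Fin 3) F L) (hb0 : bs 0 = x) (hb1 : bs 1 = y) (hb2 : bs 2 = z)
    {hx hy hz' : H} (bsH : Module.Basis (Fin 3) F H)
    (hH0 : bsH 0 = hx) (hH1' : bsH 1 = hy) (hH2' : bsH 2 = hz')
    (hxyz : ⁅x, y⁆ = z) (hxz0 : ⁅x, z⁆ = 0) (hyz0 : ⁅y, z⁆ = 0)
    (hH1 : ⁅hx, hy⁆ = hz') (hH2 : ⁅hx, hz'⁆ = 0) (hH3 : ⁅hy, hz'⁆ = 0) :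
    Nonempty (L ≃ₗ⁅F⁆ H) := by
  let E : L ≃ₗ[F] H := bs.equiv bsH (Equiv.refl _)
  have Ex : E x = hx := by rw [← hb0, ← hH0]; exact bs.equiv_apply 0 bsH _
  have Ey : E y = hy := by rw [← hb1, ← hH1']; exact bs.equiv_apply 1 bsH _
  have Ez : E z = hz' := by rw [← hb2, ← hH2']; exact bs.equiv_apply 2 bsH _
  have hmap : ∀ u v : L, E ⁅u, v⁆ = ⁅E u, E v⁆ := by
    refine bracket_ext bs E.toLinearMap fun i j => ?_
    fin_cases i <;> fin_cases j <;>
      simp only [show (⟨0, by omega⟩ : Fin 3) = 0 from rfl, show (⟨1, by omega⟩ : Fin 3) = 1 from rfl,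
        show (⟨2, by omega⟩ : Fin 3) = 2 from rfl, LinearEquiv.coe_coe, Module.Basis.equiv_apply,
        Equiv.refl_apply, hb0, hb1, hb2, Ex, Ey, Ez, lie_self, hxyz, hxz0, hyz0,
        ← lie_skew y x, ← lie_skew z x, ← lie_skew z y, ← lie_skew hy hx, ← lie_skew hz' hx,
        ← lie_skew hz' hy, neg_neg, hH1, hH2, hH3, map_zero, map_neg, neg_zero]
  exact ⟨{ toLieHom := { toLinearMap := ↑E, map_lie' := hmap _ _ },
           invFun := E.symm, left_inv := E.left_inv, right_inv := E.right_inv }⟩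

open LieAlgebra.SpecialLinear in
set_option maxHeartbeats 1000000 in
private lemma iso_sl2 {F : Type*} [Field F] [CharZero F] {L : Type*} [LieRing L] [LieAlgebra F L]
    {x y z : L} (bs : Module.Basis (Fin 3) F L) (hb0 : bs 0 = x) (hb1 : bs 1 = y) (hb2 : bs 2 = z)
    {a : F} (hane : a ≠ 0) (hxz : ⁅x, z⁆ = a • x) (hyz : ⁅y, z⁆ = (-a) • y)
    (hxyz : ⁅x, y⁆ = z) :
    Nonempty (L ≃ₗ⁅F⁆ LieAlgebra.SpecialLinear.sl (Fin 2) F) := by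
  classical
  set e2 : sl (Fin 2) F := single 0 1 (by decide) (1 : F) with he2
  set f2 : sl (Fin 2) F := single 1 0 (by decide) (1 : F) with hf2
  set h2 : sl (Fin 2) F := ⁅e2, f2⁆ with hh2
  have hval : ∀ A B : sl (Fin 2) F, (⁅A, B⁆ : sl (Fin 2) F).val = A.val * B.val - B.val * A.val :=
    fun A B => rfl
  have val_smul : ∀ (c : F) (A : sl (Fin 2) F), ((c • A : sl (Fin 2) F) : Matrix (Fin 2) (Fin 2) F)
      = c • (A : Matrix (Fin 2) (Fin 2) F) := fun _ _ => rfl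
  have val_add : ∀ (A B : sl (Fin 2) F), ((A + B : sl (Fin 2) F) : Matrix (Fin 2) (Fin 2) F)
      = (A : Matrix (Fin 2) (Fin 2) F) + (B : Matrix (Fin 2) (Fin 2) F) := fun _ _ => rfl
  have hh2v : h2.val = Matrix.single 0 0 1 - Matrix.single 1 1 1 := by
    rw [hh2, hval, he2, hf2, val_single, val_single, Matrix.single_mul_single_same,
      Matrix.single_mul_single_same, one_mul]
  have rel_he : ⁅h2, e2⁆ = (2 : F) • e2 := by
    apply Subtype.ext
    rw [hval, hh2v]
    ext i j
    fin_cases i <;> fin_cases j <;>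
      simp [he2, val_smul, Matrix.smul_apply, val_single, Matrix.mul_apply,
        Fin.sum_univ_two, Matrix.single, Matrix.sub_apply, Matrix.of_apply, smul_eq_mul] <;>
      norm_num
  have rel_hf : ⁅h2, f2⁆ = (-2 : F) • f2 := by
    apply Subtype.ext
    rw [hval, hh2v]
    ext i j
    fin_cases i <;> fin_cases j <;>
      simp [hf2, val_smul, Matrix.smul_apply, val_single, Matrix.mul_apply,
        Fin.sum_univ_two, Matrix.single, Matrix.sub_apply, Matrix.of_apply, smul_eq_mul] <;>
      norm_num
  set ν : F := -(a / 2) with hν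
  have hν0 : ν ≠ 0 := by
    rw [hν]
    simp only [neg_ne_zero]
    exact div_ne_zero hane two_ne_zero
  set T : L →ₗ[F] sl (Fin 2) F := bs.constr F ![e2, ν • f2, ν • h2] with hT
  have hTx : T x = e2 := by rw [← hb0, hT, Module.Basis.constr_basis]; rfl
  have hTy : T y = ν • f2 := by rw [← hb1, hT, Module.Basis.constr_basis]; rfl
  have hTz : T z = ν • h2 := by rw [← hb2, hT, Module.Basis.constr_basis]; rfl
  have keyxy : T ⁅x, y⁆ = ⁅T x, T y⁆ := by
    rw [hxyz, hTx, hTy, hTz, lie_smul, ← hh2]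
  have keyxz : T ⁅x, z⁆ = ⁅T x, T z⁆ := by
    rw [hxz, map_smul, hTx, hTz, lie_smul, ← lie_skew e2 h2, rel_he, hν]
    module
  have keyyz : T ⁅y, z⁆ = ⁅T y, T z⁆ := by
    rw [hyz, map_smul, hTy, hTz, smul_lie, lie_smul, ← lie_skew f2 h2, rel_hf, hν]
    module
  have flip : ∀ u v : L, T ⁅u, v⁆ = ⁅T u, T v⁆ → T ⁅v, u⁆ = ⁅T v, T u⁆ := by
    intro u v h
    rw [← lie_skew v u, ← lie_skew (T v) (T u), map_neg, h]
  have hmaplie : ∀ u v : L, T ⁅u, v⁆ = ⁅T u, T v⁆ := by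
    refine bracket_ext bs T fun i j => ?_
    fin_cases i <;> fin_cases j <;>
      simp only [show (⟨0, by omega⟩ : Fin 3) = 0 from rfl,
        show (⟨1, by omega⟩ : Fin 3) = 1 from rfl,
        show (⟨2, by omega⟩ : Fin 3) = 2 from rfl, hb0, hb1, hb2]
    · simp [lie_self]
    · exact keyxy
    · exact keyxz
    · exact flip x y keyxy
    · simp [lie_self]
    · exact keyyz
    · exact flip x z keyxz
    · exact flip y z keyyz
    · simp [lie_self]
  set S : sl (Fin 2) F →ₗ[F] L :=
    { toFun := fun A => (A.val 0 1) • x + (ν⁻¹ * A.val 1 0) • y + (ν⁻¹ * A.val 0 0) • z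
      map_add' := by
        intro A B
        simp only [val_add, Matrix.add_apply, mul_add]
        module
      map_smul' := by
        intro c A
        simp only [val_smul, Matrix.smul_apply, smul_eq_mul, RingHom.id_apply, mul_left_comm]
        module } with hS
  have hSapp : ∀ A : sl (Fin 2) F,
      S A = (A.val 0 1) • x + (ν⁻¹ * A.val 1 0) • y + (ν⁻¹ * A.val 0 0) • z := fun A => rfl
  have left_inv : ∀ v : L, S (T v) = v := by
    have : S.comp T = LinearMap.id := by
      refine bs.ext fun i => ?_
      fin_cases i <;>
        simp only [show (⟨0, by omega⟩ : Fin 3) = 0 from rfl,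
          show (⟨1, by omega⟩ : Fin 3) = 1 from rfl,
          show (⟨2, by omega⟩ : Fin 3) = 2 from rfl, hb0, hb1, hb2,
          LinearMap.comp_apply, LinearMap.id_apply, hTx, hTy, hTz, hSapp,
          val_smul, Matrix.smul_apply, smul_eq_mul]
      · rw [he2, val_single]
        simp [Matrix.single, Matrix.of_apply]
      · rw [hf2, val_single]
        simp [Matrix.single, Matrix.of_apply, inv_mul_cancel₀ hν0]
      · rw [hh2v]
        simp [Matrix.single, Matrix.sub_apply, Matrix.of_apply, inv_mul_cancel₀ hν0,
          mul_comm]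
    intro v
    exact LinearMap.congr_fun this v
  have right_inv : ∀ A : sl (Fin 2) F, T (S A) = A := by
    intro A
    have htr : A.val 0 0 + A.val 1 1 = 0 := by
      have h : Matrix.trace (A.val) = 0 := A.2
      simpa [Matrix.trace, Fin.sum_univ_two, Matrix.diag] using h
    rw [hSapp, map_add, map_add, map_smul, map_smul, map_smul, hTx, hTy, hTz,
      smul_smul, smul_smul, mul_comm _ ν, ← mul_assoc, mul_inv_cancel₀ hν0, one_mul,
      mul_comm _ ν, ← mul_assoc, mul_inv_cancel₀ hν0, one_mul]
    apply Subtype.ext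
    simp only [val_add, val_smul]
    rw [he2, hf2, val_single, val_single, hh2v]
    refine Matrix.ext fun i j => ?_
    fin_cases i <;> fin_cases j <;>
      simp only [show (⟨0, by omega⟩ : Fin 2) = 0 from rfl, show (⟨1, by omega⟩ : Fin 2) = 1 from rfl,
        Matrix.add_apply, Matrix.sub_apply, Matrix.smul_apply, smul_eq_mul] <;>
      simp [Matrix.single] <;>
      first
      | linear_combination htr
      | linear_combination -htr
      | linear_combination 2*htr
      | linear_combination -2*htr
  exact ⟨{ toLieHom := { toLinearMap := T, map_lie' := hmaplie _ _ },
           invFun := S, left_inv := left_inv, right_inv := right_inv }⟩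

/-- let L = L₁ ⊕ L₀ ⊕ L₋₁ be three-graded with L₁ = Fx, L₋₁ = Fy,
L₀ = Fz one-dimensional, z = [x,y] whenever [x,y] ≠ 0.  If (L₁, L₋₁) is a
plus-minus pair for L, then L is isomorphic to sl₂(F) or to the
3-dimensional Heisenberg Lie algebra. -/
theorem stmt_19 (F : Type*) [Field F] [CharZero F]
    (L : Type*) [LieRing L] [LieAlgebra F L] (x y z : L)
    (hbasis : ∃ bs : Module.Basis (Fin 3) F L, bs 0 = x ∧ bs 1 = y ∧ bs 2 = z)
    -- grading conditions: [L₁,L₋₁] ⊆ L₀, [L₁,L₀] ⊆ L₁, [L₋₁,L₀] ⊆ L₋₁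
    (hxy : ⁅x, y⁆ ∈ Submodule.span F ({z} : Set L))
    (hxz : ⁅x, z⁆ ∈ Submodule.span F ({x} : Set L))
    (hyz : ⁅y, z⁆ ∈ Submodule.span F ({y} : Set L))
    (hz : ⁅x, y⁆ ≠ 0 → ⁅x, y⁆ = z)
    (hpm : IsPlusMinusPair F L (LieSubalgebra.lieSpan F L {x})
        (LieSubalgebra.lieSpan F L {y}))
    -- H is the 3-dimensional Heisenberg Lie algebra
    (H : Type*) [LieRing H] [LieAlgebra F H] (hx hy hz' : H)
    (hbH : ∃ bs : Module.Basis (Fin 3) F H, bs 0 = hx ∧ bs 1 = hy ∧ bs 2 = hz')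
    (hH1 : ⁅hx, hy⁆ = hz') (hH2 : ⁅hx, hz'⁆ = 0) (hH3 : ⁅hy, hz'⁆ = 0) :
    Nonempty (L ≃ₗ⁅F⁆ LieAlgebra.SpecialLinear.sl (Fin 2) F) ∨
      Nonempty (L ≃ₗ⁅F⁆ H) := by
  obtain ⟨bs, hb0, hb1, hb2⟩ := hbasis
  obtain ⟨a, ha⟩ := Submodule.mem_span_singleton.mp hxz
  obtain ⟨b, hbc⟩ := Submodule.mem_span_singleton.mp hyz
  by_cases h0 : ⁅x, y⁆ = 0
  · exact (no_pm bs hb0 hb1 hb2 ha hbc h0 hpm).elim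
  · have hxyz : ⁅x, y⁆ = z := hz h0
    have hzne : z ≠ 0 := by rw [← hb2]; exact bs.ne_zero 2
    have hba : b = -a := by
      have j := leibniz_lie x y z
      rw [← hbc, ← ha, hxyz, lie_self, lie_smul, lie_smul, hxyz, zero_add,
        ← lie_skew y x, hxyz, smul_neg] at j
      have : (b + a) • z = 0 := by
        rw [add_smul, j]
        abel
      rcases smul_eq_zero.mp this with hc | hc
      · linear_combination hc
      · exact absurd hc hzne
    by_cases ha0 : a = 0
    · obtain ⟨bsH, hH0, hH1', hH2'⟩ := hbH
      exact Or.inr (iso_heis bs hb0 hb1 hb2 bsH hH0 hH1' hH2' hxyz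
        (by rw [← ha, ha0, zero_smul]) (by rw [← hbc, hba, ha0, neg_zero, zero_smul])
        hH1 hH2 hH3)
    · exact Or.inl (iso_sl2 bs hb0 hb1 hb2 ha0 ha.symm (by rw [← hbc, hba]) hxyz)
end
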